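/- arXiv:2303.10072 — 5 statements merged into one kernel-verified Lean document; each statement's English description precedes it below -/
import Mathlib

section
/- Assume h > 0, n ≥ 1, and λ_0, …, λ_{n−1} are real numbers with λ_j ≠ −1/h for all j, such that 0 < |e_λ(nh)| and |e_λ(nh)| ≠ 1. Then the first-order equation Δ_h x(k) − λ(k)x(k) = 0 is Hyers–Ulam stable on ℕ with Hyers–Ulam stability constant K_0(λ): for every ε > 0 and every ψ : ℕ → ℝ satisfying |Δ_h ψ(k) − λ(k)ψ(k)| ≤ ε for all k ∈ ℕ, there exists x : ℕ → ℝ with Δ_h x(k) − λ(k)x(k) = 0 for all k ∈ ℕ and |ψ(k) − x(k)| ≤ K_0(λ)·ε for all k ∈ ℕ. -/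
/-- The forward `h`-difference operator on sequences. -/
noncomputable def hDiff (h : ℝ) (x : ℕ → ℝ) (k : ℕ) : ℝ := (x (k + 1) - x k) / h

/-- The discrete exponential over one period: `∏_{k=0}^{n-1} (1 + h c_k)`. -/
noncomputable def eExp (h : ℝ) (n : ℕ) (c : ℕ → ℝ) : ℝ :=
  ∏ k ∈ Finset.range n, (1 + h * c k)

/-- `S_k = Σ_{j=1}^{n} ∏_{i=0}^{j-1} 1/|1 + h c_{(k+i) mod n}|`. -/
noncomputable def Ssum (h : ℝ) (n : ℕ) (c : ℕ → ℝ) (k : ℕ) : ℝ :=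
  ∑ j ∈ Finset.range n, ∏ i ∈ Finset.range (j + 1), 1 / |1 + h * c ((k + i) % n)|

/-- The Hyers–Ulam constant `K₀ = (h|e|/|1-|e||) · max{S_0,…,S_{n-1}}`. -/
noncomputable def K0 (h : ℝ) (n : ℕ) (c : ℕ → ℝ) : ℝ :=
  (h * abs (eExp h n c) / abs (1 - abs (eExp h n c))) * ⨆ k : Fin n, Ssum h n c (k : ℕ)

/-- The `n`-cycle coefficient `λ(k) = c (k mod n)`. -/
def cyc (n : ℕ) (c : ℕ → ℝ) (k : ℕ) : ℝ := c (k % n)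

open Finset

section Aux
variable {h : ℝ} {n : ℕ} {c : ℕ → ℝ}

noncomputable def bb (h : ℝ) (n : ℕ) (c : ℕ → ℝ) (t : ℕ) : ℝ := |1 + h * c (t % n)|

noncomputable def PP (h : ℝ) (n : ℕ) (c : ℕ → ℝ) (k : ℕ) : ℝ :=
  ∏ i ∈ Finset.range k, (1 + h * c (i % n))

lemma a_ne (hh : 0 < h) (hn : 1 ≤ n) (hc : ∀ j, j < n → c j ≠ -1 / h) (t : ℕ) :
    1 + h * c (t % n) ≠ 0 := by
  intro hz
  have := hc (t % n) (Nat.mod_lt _ hn)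
  apply this
  field_simp
  linarith

lemma bb_pos (hh : 0 < h) (hn : 1 ≤ n) (hc : ∀ j, j < n → c j ≠ -1 / h) (t : ℕ) :
    0 < bb h n c t := abs_pos.2 (a_ne hh hn hc t)

lemma bb_period (t : ℕ) : bb h n c (t + n) = bb h n c t := by
  simp [bb, Nat.add_mod_right]

lemma bb_prod_period (hh : 0 < h) (hn : 1 ≤ n) (hc : ∀ j, j < n → c j ≠ -1 / h) (t : ℕ) :
    ∏ i ∈ range n, bb h n c (t + i) = |eExp h n c| := by
  have base : ∏ i ∈ range n, bb h n c i = |eExp h n c| := by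
    rw [eExp, Finset.abs_prod]
    refine Finset.prod_congr rfl fun i hi => ?_
    rw [bb, Nat.mod_eq_of_lt (mem_range.1 hi)]
  induction t with
  | zero => simpa using base
  | succ t ih =>
    have h1 : ∏ i ∈ range (n+1), bb h n c (t + i)
        = (∏ i ∈ range n, bb h n c (t + i)) * bb h n c (t + n) :=
      Finset.prod_range_succ _ n
    have h2 : ∏ i ∈ range (n+1), bb h n c (t + i)
        = bb h n c t * ∏ i ∈ range n, bb h n c (t + 1 + i) := by
      rw [Finset.prod_range_succ' (fun i => bb h n c (t + i)) n, mul_comm]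
      congr 1
      refine Finset.prod_congr rfl fun i _ => ?_
      congr 1; omega
    have hbt : bb h n c t ≠ 0 := ne_of_gt (bb_pos hh hn hc t)
    have heq : bb h n c t * ∏ i ∈ range n, bb h n c (t + 1 + i)
        = bb h n c t * ∏ i ∈ range n, bb h n c (t + i) := by
      rw [← h2, h1, bb_period t, mul_comm]
    exact (mul_left_cancel₀ hbt heq).trans ih

lemma PP_abs (k : ℕ) : |PP h n c k| = ∏ i ∈ range k, bb h n c i := by
  rw [PP, Finset.abs_prod]; rfl

lemma PP_succ (k : ℕ) : PP h n c (k + 1) = PP h n c k * (1 + h * c (k % n)) :=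
  Finset.prod_range_succ _ k

lemma PP_ne (hh : 0 < h) (hn : 1 ≤ n) (hc : ∀ j, j < n → c j ≠ -1 / h) (k : ℕ) :
    PP h n c k ≠ 0 :=
  Finset.prod_ne_zero_iff.2 fun i _ => a_ne hh hn hc i

lemma PP_abs_pos (hh : 0 < h) (hn : 1 ≤ n) (hc : ∀ j, j < n → c j ≠ -1 / h) (k : ℕ) :
    0 < |PP h n c k| := abs_pos.2 (PP_ne hh hn hc k)

lemma PP_abs_add_period (hh : 0 < h) (hn : 1 ≤ n) (hc : ∀ j, j < n → c j ≠ -1 / h) (m : ℕ) :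
    |PP h n c (m + n)| = |eExp h n c| * |PP h n c m| := by
  rw [PP_abs, PP_abs, Finset.prod_range_add, mul_comm]
  rw [bb_prod_period hh hn hc m]

lemma PP_abs_divmod (hh : 0 < h) (hn : 1 ≤ n) (hc : ∀ j, j < n → c j ≠ -1 / h) (k : ℕ) :
    |PP h n c k| = |eExp h n c| ^ (k / n) * |PP h n c (k % n)| := by
  induction k using Nat.strong_induction_on with
  | _ k ih =>
    rcases lt_or_ge k n with hk | hk
    · rw [Nat.div_eq_of_lt hk, Nat.mod_eq_of_lt hk, pow_zero, one_mul]
    · have h1 : k = (k - n) + n := by omega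
      have h2 : k - n < k := by omega
      rw [h1, PP_abs_add_period hh hn hc, ih _ h2, Nat.add_div_right _ hn,
        Nat.add_mod_right, pow_succ]
      ring

lemma Ssum_nonneg (k : ℕ) : 0 ≤ Ssum h n c k :=
  Finset.sum_nonneg fun j _ => Finset.prod_nonneg fun i _ => by positivity

lemma Ssum_mod (k : ℕ) : Ssum h n c k = Ssum h n c (k % n) := by
  unfold Ssum
  refine Finset.sum_congr rfl fun j _ => Finset.prod_congr rfl fun i _ => ?_
  have : (k + i) % n = (k % n + i) % n := by
    conv_lhs => rw [Nat.add_mod]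
    conv_rhs => rw [Nat.add_mod, Nat.mod_mod_of_dvd _ dvd_rfl]
  rw [this]

lemma Ssum_le_sup (hn : 1 ≤ n) (k : ℕ) :
    Ssum h n c k ≤ ⨆ j : Fin n, Ssum h n c (j : ℕ) := by
  rw [Ssum_mod]
  exact le_ciSup (f := fun j : Fin n => Ssum h n c (j : ℕ))
    (Set.Finite.bddAbove (Set.finite_range _)) ⟨k % n, Nat.mod_lt _ hn⟩

end Aux

/-- geometric block bound -/
lemma lemA {n : ℕ} (hn : 0 < n) {κ : ℝ} (hκ0 : 0 ≤ κ) (hκ1 : κ < 1)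
    (w : ℕ → ℝ) (hw : ∀ s, 0 ≤ w s) (M : ℕ) :
    ∑ m ∈ Finset.range M, κ ^ (m / n) * w (m % n) ≤ (∑ s ∈ Finset.range n, w s) / (1 - κ) := by
  have hterm : ∀ m, 0 ≤ κ ^ (m / n) * w (m % n) :=
    fun m => mul_nonneg (pow_nonneg hκ0 _) (hw _)
  have hsub : ∑ m ∈ Finset.range M, κ ^ (m / n) * w (m % n)
      ≤ ∑ m ∈ Finset.range (M * n), κ ^ (m / n) * w (m % n) := by
    apply Finset.sum_le_sum_of_subset_of_nonneg
    · exact Finset.range_subset_range.2 (Nat.le_mul_of_pos_right M hn)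
    · exact fun m _ _ => hterm m
  have key : ∀ Q : ℕ, ∑ m ∈ Finset.range (Q * n), κ ^ (m / n) * w (m % n)
      = (∑ q ∈ Finset.range Q, κ ^ q) * ∑ s ∈ Finset.range n, w s := by
    intro Q
    induction Q with
    | zero => simp
    | succ Q ih =>
      rw [Nat.succ_mul, Finset.sum_range_add, ih, Finset.sum_range_succ, add_mul]
      congr 1
      rw [Finset.mul_sum]
      refine Finset.sum_congr rfl fun s hs => ?_
      have hs' := Finset.mem_range.1 hs
      have hd : (Q * n + s) / n = Q := by
        rw [mul_comm, Nat.mul_add_div hn, Nat.div_eq_of_lt hs']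
        omega
      have hm : (Q * n + s) % n = s := by
        rw [mul_comm, Nat.mul_add_mod, Nat.mod_eq_of_lt hs']
      rw [hd, hm]
  have hW : 0 ≤ ∑ s ∈ Finset.range n, w s := Finset.sum_nonneg fun s _ => hw s
  have h1κ : (0:ℝ) < 1 - κ := by linarith
  have hgeom : ∑ q ∈ Finset.range M, κ ^ q ≤ 1 / (1 - κ) := by
    rw [geom_sum_eq (ne_of_lt hκ1)]
    have heq : (κ ^ M - 1) / (κ - 1) = (1 - κ ^ M) / (1 - κ) := by
      rw [← neg_div_neg_eq]; ring_nf
    rw [heq]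
    have : 0 ≤ κ ^ M := pow_nonneg hκ0 M
    exact (div_le_div_iff_of_pos_right h1κ).2 (by linarith)
  calc ∑ m ∈ Finset.range M, κ ^ (m / n) * w (m % n)
      ≤ ∑ m ∈ Finset.range (M * n), κ ^ (m / n) * w (m % n) := hsub
    _ = (∑ q ∈ Finset.range M, κ ^ q) * ∑ s ∈ Finset.range n, w s := key M
    _ ≤ (1 / (1 - κ)) * ∑ s ∈ Finset.range n, w s := by
        apply mul_le_mul_of_nonneg_right hgeom hW
    _ = (∑ s ∈ Finset.range n, w s) / (1 - κ) := by ring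

section Main
variable {h : ℝ} {n : ℕ} {c : ℕ → ℝ}

/-- reciprocal-product reduction, the `|e| > 1` case building block -/
lemma r_eq (hh : 0 < h) (hn : 1 ≤ n) (hc : ∀ j, j < n → c j ≠ -1 / h) (k : ℕ) :
    ∀ m, ∏ i ∈ range (m + 1), (1 / bb h n c (k + i))
      = (1 / |eExp h n c|) ^ (m / n) * ∏ i ∈ range (m % n + 1), (1 / bb h n c (k + i)) := by
  intro m
  induction m using Nat.strong_induction_on with
  | _ m ih =>
    rcases lt_or_ge m n with hm | hm
    · rw [Nat.div_eq_of_lt hm, Nat.mod_eq_of_lt hm, pow_zero, one_mul]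
    · obtain ⟨m', rfl⟩ : ∃ m', m = m' + n := ⟨m - n, by omega⟩
      have hsplit : m' + n + 1 = (m' + 1) + n := by omega
      rw [hsplit, Finset.prod_range_add]
      have hper : ∏ i ∈ range n, (1 / bb h n c (k + (m' + 1 + i)))
          = 1 / |eExp h n c| := by
        rw [Finset.prod_div_distrib, Finset.prod_const_one,
          ← bb_prod_period hh hn hc (k + m' + 1)]
        congr 1
        exact Finset.prod_congr rfl fun i _ => by congr 1; omega
      rw [hper, ih m' (by omega), Nat.add_div_right _ hn, Nat.add_mod_right, pow_succ]
      ring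

/-- partial sum bound in the `|e| > 1` case -/
lemma sumr_le (hh : 0 < h) (hn : 1 ≤ n) (hc : ∀ j, j < n → c j ≠ -1 / h)
    (hE : 1 < |eExp h n c|) (k M : ℕ) :
    ∑ m ∈ range M, ∏ i ∈ range (m + 1), (1 / bb h n c (k + i))
      ≤ Ssum h n c k * (|eExp h n c| / (|eExp h n c| - 1)) := by
  have hκ0 : (0:ℝ) ≤ 1 / |eExp h n c| := one_div_nonneg.2 (abs_nonneg _)
  have hκ1 : 1 / |eExp h n c| < 1 := by
    rw [div_lt_one (by linarith)]; linarith
  have hw : ∀ s, (0:ℝ) ≤ ∏ i ∈ range (s + 1), (1 / bb h n c (k + i)) :=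
    fun s => Finset.prod_nonneg fun i _ => one_div_nonneg.2 (bb_pos hh hn hc _).le
  have hS : ∑ s ∈ range n, ∏ i ∈ range (s + 1), (1 / bb h n c (k + i)) = Ssum h n c k := by
    refine Finset.sum_congr rfl fun s _ => Finset.prod_congr rfl fun i _ => ?_
    simp [bb]
  have key := lemA (n := n) (by omega) hκ0 hκ1
    (fun s => ∏ i ∈ range (s + 1), (1 / bb h n c (k + i))) hw M
  calc ∑ m ∈ range M, ∏ i ∈ range (m + 1), (1 / bb h n c (k + i))
      = ∑ m ∈ range M, (1 / |eExp h n c|) ^ (m / n)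
          * ∏ i ∈ range (m % n + 1), (1 / bb h n c (k + i)) :=
        Finset.sum_congr rfl fun m _ => r_eq hh hn hc k m
    _ ≤ (∑ s ∈ range n, ∏ i ∈ range (s + 1), (1 / bb h n c (k + i)))
          / (1 - 1 / |eExp h n c|) := key
    _ = Ssum h n c k * (|eExp h n c| / (|eExp h n c| - 1)) := by
        rw [hS]
        have hE0 : |eExp h n c| ≠ 0 := by intro hz; rw [hz] at hE; linarith
        have hE1 : |eExp h n c| - 1 ≠ 0 := by intro hz; linarith
        field_simp

/-- complement identity: backward product over `s` terms ending at `k-1` -/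
lemma v_compl (hh : 0 < h) (hn : 1 ≤ n) (hc : ∀ j, j < n → c j ≠ -1 / h)
    (k s : ℕ) (hs : s < n) (hsk : s ≤ k) :
    ∏ i ∈ range s, bb h n c (k - s + i)
      = |eExp h n c| * ∏ i ∈ range (n - s), (1 / bb h n c (k + i)) := by
  have hP : 0 < ∏ i ∈ range (n - s), bb h n c (k + i) :=
    Finset.prod_pos fun i _ => bb_pos hh hn hc _
  have hsplit : ∏ i ∈ range (s + (n - s)), bb h n c (k - s + i)
      = (∏ i ∈ range s, bb h n c (k - s + i))
        * ∏ i ∈ range (n - s), bb h n c (k - s + (s + i)) :=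
    Finset.prod_range_add _ s (n - s)
  rw [show s + (n - s) = n from by omega, bb_prod_period hh hn hc (k - s)] at hsplit
  have h2 : ∏ i ∈ range (n - s), bb h n c (k - s + (s + i))
      = ∏ i ∈ range (n - s), bb h n c (k + i) :=
    Finset.prod_congr rfl fun i _ => by congr 1; omega
  rw [h2] at hsplit
  have hinv : ∏ i ∈ range (n - s), (1 / bb h n c (k + i))
      = 1 / ∏ i ∈ range (n - s), bb h n c (k + i) := by
    rw [Finset.prod_div_distrib, Finset.prod_const_one]
  rw [hinv, mul_one_div, eq_div_iff (ne_of_gt hP)]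
  linarith [hsplit]

/-- backward product reduction, `|e| < 1` case -/
lemma v_eq (hh : 0 < h) (hn : 1 ≤ n) (hc : ∀ j, j < n → c j ≠ -1 / h) (k : ℕ) :
    ∀ m, m < k → ∏ i ∈ range m, bb h n c (k - m + i)
      = |eExp h n c| ^ (m / n) * ∏ i ∈ range (m % n), bb h n c (k - m % n + i) := by
  intro m
  induction m using Nat.strong_induction_on with
  | _ m ih =>
    intro hmk
    rcases lt_or_ge m n with hm | hm
    · rw [Nat.div_eq_of_lt hm, Nat.mod_eq_of_lt hm, pow_zero, one_mul]
    · obtain ⟨m', rfl⟩ : ∃ m', m = n + m' := ⟨m - n, by omega⟩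
      rw [Finset.prod_range_add]
      have h1 : ∏ i ∈ range n, bb h n c (k - (n + m') + i) = |eExp h n c| :=
        bb_prod_period hh hn hc _
      have h2 : ∏ i ∈ range m', bb h n c (k - (n + m') + (n + i))
          = ∏ i ∈ range m', bb h n c (k - m' + i) :=
        Finset.prod_congr rfl fun i _ => by congr 1; omega
      rw [h1, h2, ih m' (by omega) (by omega)]
      have hd : (n + m') / n = m' / n + 1 := Nat.add_div_left m' (by omega)
      rw [hd, show (n + m') % n = m' % n from Nat.add_mod_left n m', pow_succ]
      ring

lemma v_full (hh : 0 < h) (hn : 1 ≤ n) (hc : ∀ j, j < n → c j ≠ -1 / h)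
    (k m : ℕ) (hm : m < k) :
    ∏ i ∈ range m, bb h n c (k - m + i)
      = |eExp h n c| ^ (m / n)
        * (|eExp h n c| * ∏ i ∈ range (n - m % n), (1 / bb h n c (k + i))) := by
  rw [v_eq hh hn hc k m hm,
    v_compl hh hn hc k (m % n) (Nat.mod_lt _ hn) (le_trans (Nat.mod_le _ _) hm.le)]

/-- partial sum bound in the `|e| < 1` case -/
lemma sumv_le (hh : 0 < h) (hn : 1 ≤ n) (hc : ∀ j, j < n → c j ≠ -1 / h)
    (hE : |eExp h n c| < 1) (k : ℕ) :
    ∑ j ∈ range k, |PP h n c k| / |PP h n c (j + 1)|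
      ≤ |eExp h n c| * Ssum h n c k / (1 - |eExp h n c|) := by
  have hE0 : (0:ℝ) ≤ |eExp h n c| := abs_nonneg _
  have step1 : ∑ j ∈ range k, |PP h n c k| / |PP h n c (j + 1)|
      = ∑ j ∈ range k, ∏ i ∈ range (k - 1 - j), bb h n c (k - (k - 1 - j) + i) := by
    refine Finset.sum_congr rfl fun j hj => ?_
    have hjk := Finset.mem_range.1 hj
    have h1 : ∏ i ∈ range k, bb h n c i
        = (∏ i ∈ range (j + 1), bb h n c i)
          * ∏ i ∈ range (k - (j + 1)), bb h n c (j + 1 + i) := by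
      rw [← Finset.prod_range_add, show j + 1 + (k - (j + 1)) = k from by omega]
    have hpos : (0:ℝ) < ∏ i ∈ range (j + 1), bb h n c i :=
      Finset.prod_pos fun i _ => bb_pos hh hn hc _
    rw [PP_abs, PP_abs, h1, mul_comm, mul_div_assoc, div_self (ne_of_gt hpos), mul_one]
    exact Finset.prod_congr (congrArg range (by omega)) fun i hi => by congr 1; omega
  have step2 : ∑ j ∈ range k, ∏ i ∈ range (k - 1 - j), bb h n c (k - (k - 1 - j) + i)
      = ∑ m ∈ range k, ∏ i ∈ range m, bb h n c (k - m + i) :=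
    Finset.sum_range_reflect (fun m => ∏ i ∈ range m, bb h n c (k - m + i)) k
  have step3 : ∑ m ∈ range k, ∏ i ∈ range m, bb h n c (k - m + i)
      = ∑ m ∈ range k, |eExp h n c| ^ (m / n)
          * (|eExp h n c| * ∏ i ∈ range (n - m % n), (1 / bb h n c (k + i))) :=
    Finset.sum_congr rfl fun m hm => v_full hh hn hc k m (Finset.mem_range.1 hm)
  have hw : ∀ s, (0:ℝ) ≤ |eExp h n c| * ∏ i ∈ range (n - s), (1 / bb h n c (k + i)) :=
    fun s => mul_nonneg hE0 (Finset.prod_nonneg fun i _ =>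
      one_div_nonneg.2 (bb_pos hh hn hc _).le)
  have step4 := lemA (n := n) (by omega) hE0 hE
    (fun s => |eExp h n c| * ∏ i ∈ range (n - s), (1 / bb h n c (k + i))) hw k
  have step5 : ∑ s ∈ range n, |eExp h n c| * ∏ i ∈ range (n - s), (1 / bb h n c (k + i))
      = |eExp h n c| * Ssum h n c k := by
    rw [← Finset.mul_sum]
    congr 1
    have hrefl := Finset.sum_range_reflect
      (fun j => ∏ i ∈ range (j + 1), (1 / bb h n c (k + i))) n
    calc ∑ s ∈ range n, ∏ i ∈ range (n - s), (1 / bb h n c (k + i))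
        = ∑ s ∈ range n, ∏ i ∈ range (n - 1 - s + 1), (1 / bb h n c (k + i)) := by
          refine Finset.sum_congr rfl fun s hs => ?_
          have := Finset.mem_range.1 hs
          rw [show n - 1 - s + 1 = n - s from by omega]
      _ = ∑ j ∈ range n, ∏ i ∈ range (j + 1), (1 / bb h n c (k + i)) := hrefl
      _ = Ssum h n c k := by
          refine Finset.sum_congr rfl fun j _ => Finset.prod_congr rfl fun i _ => ?_
          simp [bb]
  rw [step1, step2, step3]
  rw [step5] at step4
  exact step4.trans_eq (by rw [mul_div_assoc])

end Main

theorem stmt_0 (h : ℝ) (hh : 0 < h) (n : ℕ) (hn : 1 ≤ n) (c : ℕ → ℝ)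
    (hc : ∀ j, j < n → c j ≠ -1 / h)
    (he0 : 0 < |eExp h n c|) (he1 : |eExp h n c| ≠ 1) :
    ∀ ε : ℝ, 0 < ε → ∀ ψ : ℕ → ℝ,
      (∀ k, |hDiff h ψ k - cyc n c k * ψ k| ≤ ε) →
      ∃ x : ℕ → ℝ, (∀ k, hDiff h x k - cyc n c k * x k = 0) ∧
        ∀ k, |ψ k - x k| ≤ K0 h n c * ε := by
  intro ε hε ψ hψ
  have h0 : h ≠ 0 := ne_of_gt hh
  -- one-step estimate
  have hstep : ∀ k, |ψ (k + 1) - (1 + h * c (k % n)) * ψ k| ≤ h * ε := by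
    intro k
    have heq : ψ (k + 1) - (1 + h * c (k % n)) * ψ k
        = h * (hDiff h ψ k - cyc n c k * ψ k) := by
      simp only [hDiff, cyc]
      field_simp
      ring
    rw [heq, abs_mul, abs_of_pos hh]
    exact mul_le_mul_of_nonneg_left (hψ k) hh.le
  -- exact solutions
  have hsol : ∀ (L : ℝ) (k : ℕ),
      hDiff h (fun k => PP h n c k * L) k - cyc n c k * (PP h n c k * L) = 0 := by
    intro L k
    simp only [hDiff, cyc, PP_succ]
    field_simp
    ring
  -- increment estimate for u j = ψ j / PP j
  have hd : ∀ j, |ψ (j + 1) / PP h n c (j + 1) - ψ j / PP h n c j|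
      ≤ h * ε / |PP h n c (j + 1)| := by
    intro j
    have hne := PP_ne hh hn hc j
    have hne1 := PP_ne hh hn hc (j + 1)
    have heq : ψ (j + 1) / PP h n c (j + 1) - ψ j / PP h n c j
        = (ψ (j + 1) - (1 + h * c (j % n)) * ψ j) / PP h n c (j + 1) := by
      rw [PP_succ] at hne1 ⊢
      have ha := a_ne hh hn hc j
      field_simp
    rw [heq, abs_div]
    have hpos := PP_abs_pos hh hn hc (j + 1)
    exact div_le_div_of_nonneg_right (hstep j) hpos.le
  -- the supremum
  have hSsup : ∀ k, Ssum h n c k ≤ ⨆ j : Fin n, Ssum h n c (j : ℕ) := Ssum_le_sup hn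
  have hSnn : (0:ℝ) ≤ ⨆ j : Fin n, Ssum h n c (j : ℕ) :=
    le_trans (Ssum_nonneg 0) (hSsup 0)
  rcases he1.lt_or_gt with hlt | hgt
  · -- case |e| < 1
    refine ⟨fun k => PP h n c k * ψ 0, hsol (ψ 0), fun k => ?_⟩
    have hPk := PP_ne hh hn hc k
    have hP0 : PP h n c 0 = 1 := by simp [PP]
    have htel : ψ k / PP h n c k - ψ 0
        = ∑ j ∈ range k, (ψ (j+1) / PP h n c (j+1) - ψ j / PP h n c j) := by
      rw [Finset.sum_range_sub (fun j => ψ j / PP h n c j) k, hP0, div_one]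
    have hkey : ψ k - PP h n c k * ψ 0 = PP h n c k * (ψ k / PP h n c k - ψ 0) := by
      field_simp
    have h1E : (0:ℝ) < 1 - |eExp h n c| := by linarith
    have hchain : |ψ k - PP h n c k * ψ 0|
        ≤ h * ε * (|eExp h n c| * Ssum h n c k / (1 - |eExp h n c|)) := by
      rw [hkey, abs_mul, htel]
      calc |PP h n c k| * |∑ j ∈ range k, (ψ (j+1) / PP h n c (j+1) - ψ j / PP h n c j)|
          ≤ |PP h n c k| * ∑ j ∈ range k, (h * ε / |PP h n c (j+1)|) := by
            apply mul_le_mul_of_nonneg_left _ (abs_nonneg _)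
            exact (Finset.abs_sum_le_sum_abs _ _).trans (Finset.sum_le_sum fun j _ => hd j)
        _ = h * ε * ∑ j ∈ range k, |PP h n c k| / |PP h n c (j+1)| := by
            rw [Finset.mul_sum, Finset.mul_sum]
            exact Finset.sum_congr rfl fun j _ => by ring
        _ ≤ h * ε * (|eExp h n c| * Ssum h n c k / (1 - |eExp h n c|)) := by
            apply mul_le_mul_of_nonneg_left (sumv_le hh hn hc hlt k)
            positivity
    refine hchain.trans ?_
    rw [K0, abs_of_pos h1E]
    have := hSsup k
    calc h * ε * (|eExp h n c| * Ssum h n c k / (1 - |eExp h n c|))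
        ≤ h * ε * (|eExp h n c| * (⨆ j : Fin n, Ssum h n c (j : ℕ)) / (1 - |eExp h n c|)) := by
          apply mul_le_mul_of_nonneg_left _ (by positivity)
          apply div_le_div_of_nonneg_right _ h1E.le
          exact mul_le_mul_of_nonneg_left this (abs_nonneg _)
      _ = h * |eExp h n c| / (1 - |eExp h n c|) * (⨆ j : Fin n, Ssum h n c (j : ℕ)) * ε := by
          ring
  · -- case |e| > 1
    set E := |eExp h n c| with hEdef
    have hE1 : (0:ℝ) < E - 1 := by linarith
    have hκ0 : (0:ℝ) ≤ 1 / E := by positivity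
    have hκ1 : 1 / E < 1 := by rw [div_lt_one (by linarith)]; linarith
    set u : ℕ → ℝ := fun k => ψ k / PP h n c k with hudef
    -- bound on |u m - u k| for k ≤ m
    have hbound : ∀ k m, k ≤ m → |u m - u k|
        ≤ h * ε / |PP h n c k| * (Ssum h n c k * (E / (E - 1))) := by
      intro k m hkm
      have htel : u m - u k = ∑ j ∈ Finset.Ico k m, (u (j+1) - u j) := by
        rw [Finset.sum_Ico_eq_sub _ hkm, Finset.sum_range_sub u, Finset.sum_range_sub u]
        ring
      have hterm : ∀ t, h * ε / |PP h n c (k + t + 1)|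
          = (h * ε / |PP h n c k|) * ∏ i ∈ range (t + 1), (1 / bb h n c (k + i)) := by
        intro t
        have hPsplit : |PP h n c (k + (t + 1))|
            = |PP h n c k| * ∏ i ∈ range (t + 1), bb h n c (k + i) := by
          rw [PP_abs, PP_abs, Finset.prod_range_add]
        have hprodpos : (0:ℝ) < ∏ i ∈ range (t + 1), bb h n c (k + i) :=
          Finset.prod_pos fun i _ => bb_pos hh hn hc _
        have hPk := PP_abs_pos hh hn hc k
        have hinv : ∏ i ∈ range (t + 1), (1 / bb h n c (k + i))
            = 1 / ∏ i ∈ range (t + 1), bb h n c (k + i) := by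
          rw [Finset.prod_div_distrib, Finset.prod_const_one]
        rw [show k + t + 1 = k + (t + 1) from by omega, hPsplit, hinv]
        field_simp
      calc |u m - u k| = |∑ j ∈ Finset.Ico k m, (u (j+1) - u j)| := by rw [htel]
          _ ≤ ∑ j ∈ Finset.Ico k m, |u (j+1) - u j| := Finset.abs_sum_le_sum_abs _ _
          _ ≤ ∑ j ∈ Finset.Ico k m, h * ε / |PP h n c (j + 1)| :=
              Finset.sum_le_sum fun j _ => hd j
          _ = ∑ t ∈ range (m - k), h * ε / |PP h n c (k + t + 1)| := by
              rw [Finset.sum_Ico_eq_sum_range]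
          _ = (h * ε / |PP h n c k|)
              * ∑ t ∈ range (m - k), ∏ i ∈ range (t + 1), (1 / bb h n c (k + i)) := by
              rw [Finset.mul_sum]
              exact Finset.sum_congr rfl fun t _ => hterm t
          _ ≤ h * ε / |PP h n c k| * (Ssum h n c k * (E / (E - 1))) := by
              apply mul_le_mul_of_nonneg_left (sumr_le hh hn hc hgt k (m - k))
              positivity
    -- lower bound on |PP k|
    set pmin : ℝ := ∏ i ∈ range n, min 1 (bb h n c i) with hpmindef
    have hpmin_pos : 0 < pmin :=
      Finset.prod_pos fun i _ => lt_min zero_lt_one (bb_pos hh hn hc i)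
    have hpmin_le : ∀ s, s < n → pmin ≤ |PP h n c s| := by
      intro s hs
      rw [PP_abs, hpmindef]
      have hsplit : ∏ i ∈ range n, min 1 (bb h n c i)
          = (∏ i ∈ range s, min 1 (bb h n c i))
            * ∏ i ∈ range (n - s), min 1 (bb h n c (s + i)) := by
        rw [← Finset.prod_range_add, show s + (n - s) = n from by omega]
      rw [hsplit]
      have h1 : ∏ i ∈ range s, min 1 (bb h n c i) ≤ ∏ i ∈ range s, bb h n c i :=
        Finset.prod_le_prod (fun i _ => le_min zero_le_one (bb_pos hh hn hc i).le)
          (fun i _ => min_le_right _ _)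
      have h2 : ∏ i ∈ range (n - s), min 1 (bb h n c (s + i)) ≤ 1 :=
        Finset.prod_le_one (fun i _ => le_min zero_le_one (bb_pos hh hn hc _).le)
          (fun i _ => min_le_left _ _)
      have h3 : (0:ℝ) ≤ ∏ i ∈ range s, min 1 (bb h n c i) :=
        Finset.prod_nonneg fun i _ => le_min zero_le_one (bb_pos hh hn hc i).le
      calc (∏ i ∈ range s, min 1 (bb h n c i))
            * ∏ i ∈ range (n - s), min 1 (bb h n c (s + i))
          ≤ (∏ i ∈ range s, min 1 (bb h n c i)) * 1 := by
            apply mul_le_mul_of_nonneg_left h2 h3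
        _ = ∏ i ∈ range s, min 1 (bb h n c i) := mul_one _
        _ ≤ ∏ i ∈ range s, bb h n c i := h1
    have hPPinv : ∀ k : ℕ, 1 / |PP h n c k| ≤ (1 / E) ^ (k / n) / pmin := by
      intro k
      have hdm := PP_abs_divmod hh hn hc k
      have hEpow : (0:ℝ) < E ^ (k / n) := by positivity
      have hge : E ^ (k / n) * pmin ≤ |PP h n c k| := by
        rw [hdm]
        exact mul_le_mul_of_nonneg_left (hpmin_le _ (Nat.mod_lt _ hn)) hEpow.le
      have hposk := PP_abs_pos hh hn hc k
      rw [div_le_div_iff₀ hposk hpmin_pos, one_mul, one_div, inv_pow,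
        inv_mul_eq_div, le_div_iff₀ hEpow, mul_comm]
      exact hge
    -- Cauchy sequence and limit
    set Smax : ℝ := ⨆ j : Fin n, Ssum h n c (j : ℕ) with hSmaxdef
    set D : ℝ := h * ε * (Smax * (E / (E - 1))) / pmin with hDdef
    have hβ : ∀ N k, N ≤ k → h * ε / |PP h n c k| * (Ssum h n c k * (E / (E - 1)))
        ≤ D * (1 / E) ^ (N / n) := by
      intro N k hNk
      have h2 : 1 / |PP h n c k| ≤ (1 / E) ^ (k / n) / pmin := hPPinv k
      have h3 : ((1:ℝ) / E) ^ (k / n) ≤ (1 / E) ^ (N / n) :=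
        pow_le_pow_of_le_one hκ0 hκ1.le (Nat.div_le_div_right hNk)
      have h3' : ((1:ℝ) / E) ^ (k / n) / pmin ≤ (1 / E) ^ (N / n) / pmin :=
        div_le_div_of_nonneg_right h3 hpmin_pos.le
      have hSk := hSsup k
      have hSknn := Ssum_nonneg (h := h) (n := n) (c := c) k
      have hmul : Ssum h n c k * (1 / |PP h n c k|)
          ≤ Smax * ((1 / E) ^ (N / n) / pmin) :=
        mul_le_mul hSk (h2.trans h3') (by positivity) hSnn
      have hA : (0:ℝ) ≤ h * ε * (E / (E - 1)) := by positivity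
      calc h * ε / |PP h n c k| * (Ssum h n c k * (E / (E - 1)))
          = (h * ε * (E / (E - 1))) * (Ssum h n c k * (1 / |PP h n c k|)) := by ring
        _ ≤ (h * ε * (E / (E - 1))) * (Smax * ((1 / E) ^ (N / n) / pmin)) :=
            mul_le_mul_of_nonneg_left hmul hA
        _ = D * (1 / E) ^ (N / n) := by rw [hDdef]; ring
    have hcauchy : CauchySeq u := by
      apply cauchySeq_of_le_tendsto_0 (fun N => D * (1 / E) ^ (N / n))
      · intro p q N hp hq
        rcases le_total p q with hpq | hqp
        · rw [Real.dist_eq, abs_sub_comm]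
          exact (hbound p q hpq).trans (hβ N p hp)
        · rw [Real.dist_eq]
          exact (hbound q p hqp).trans (hβ N q hq)
      · have h1 : Filter.Tendsto (fun N : ℕ => N / n) Filter.atTop Filter.atTop :=
          Filter.tendsto_atTop_atTop.2 fun B =>
            ⟨B * n, fun a ha => (Nat.le_div_iff_mul_le (by omega)).2 ha⟩
        have h2 := tendsto_pow_atTop_nhds_zero_of_lt_one hκ0 hκ1
        have h3 := (h2.comp h1).const_mul D
        simpa using h3
    obtain ⟨L, hL⟩ := cauchySeq_tendsto_of_complete hcauchy
    refine ⟨fun k => PP h n c k * L, hsol L, fun k => ?_⟩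
    have hlim : |u k - L| ≤ h * ε / |PP h n c k| * (Ssum h n c k * (E / (E - 1))) := by
      have htt : Filter.Tendsto (fun m => |u k - u m|) Filter.atTop (nhds |u k - L|) :=
        (tendsto_const_nhds.sub hL).abs
      apply le_of_tendsto htt
      filter_upwards [Filter.eventually_ge_atTop k] with m hm
      rw [abs_sub_comm]
      exact hbound k m hm
    have hPk := PP_ne hh hn hc k
    have hkey : ψ k - PP h n c k * L = PP h n c k * (u k - L) := by
      rw [hudef]
      field_simp
    rw [hkey, abs_mul]
    have hPkpos := PP_abs_pos hh hn hc k
    have hchain : |PP h n c k| * |u k - L| ≤ h * ε * (Ssum h n c k * (E / (E - 1))) := by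
      calc |PP h n c k| * |u k - L|
          ≤ |PP h n c k| * (h * ε / |PP h n c k| * (Ssum h n c k * (E / (E - 1)))) :=
            mul_le_mul_of_nonneg_left hlim (abs_nonneg _)
        _ = h * ε * (Ssum h n c k * (E / (E - 1))) := by
            field_simp
    refine hchain.trans ?_
    rw [K0, ← hEdef, ← hSmaxdef]
    have habs : |1 - E| = E - 1 := by rw [abs_of_neg (by linarith)]; ring
    rw [habs]
    calc h * ε * (Ssum h n c k * (E / (E - 1)))
        ≤ h * ε * (Smax * (E / (E - 1))) := by
          apply mul_le_mul_of_nonneg_left _ (by positivity)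
          exact mul_le_mul_of_nonneg_right (hSsup k) (by positivity)
      _ = h * E / (E - 1) * Smax * ε := by ring
end

section
/- Assume h > 0, n ≥ 1, and λ_0, …, λ_{n−1} are real numbers with λ_j ≠ 1/h for all j, such that 0 < |e_{−λ}(nh)| and |e_{−λ}(nh)| ≠ 1. Then for every f : ℕ → ℝ, the non-homogeneous first-order equation Δ_h y(k) + λ(k)y(k) = f(k) is Hyers–Ulam stable on ℕ with Hyers–Ulam stability constant K_0(−λ): for every ε > 0 and every η : ℕ → ℝ satisfying |Δ_h η(k) + λ(k)η(k) − f(k)| ≤ ε for all k ∈ ℕ, there exists y : ℕ → ℝ with Δ_h y(k) + λ(k)y(k) = f(k) for all k ∈ ℕ and |η(k) − y(k)| ≤ K_0(−λ)·ε for all k ∈ ℕ. -/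
open Finset

private lemma geomB {x : ℝ} (h0 : 0 ≤ x) (h1 : x < 1) (N : ℕ) :
    ∑ m ∈ range N, x ^ m ≤ (1 - x)⁻¹ := by
  have hx : (0:ℝ) < 1 - x := by linarith
  rw [geom_sum_eq h1.ne N, div_le_iff_of_neg (by linarith : x - 1 < 0)]
  have hxN : (0:ℝ) ≤ x ^ N := pow_nonneg h0 N
  have hinv : (1 - x)⁻¹ * (1 - x) = 1 := inv_mul_cancel₀ hx.ne'
  nlinarith [hinv]

private lemma imageSum {n : ℕ} (hn : 0 < n) (g : ℕ × ℕ → ℝ) (hg : ∀ p, 0 ≤ g p) (N : ℕ) :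
    ∑ t ∈ range N, g (t / n, t % n) ≤ ∑ p ∈ range N ×ˢ range n, g p := by
  have hinj : ∀ x ∈ range N, ∀ y ∈ range N,
      (fun t => (t / n, t % n)) x = (fun t => (t / n, t % n)) y → x = y := by
    intro x _ y _ hxy
    simp only [Prod.mk.injEq] at hxy
    have hx := Nat.div_add_mod' x n
    have hy := Nat.div_add_mod' y n
    rw [← hx, ← hy, hxy.1, hxy.2]
  rw [← Finset.sum_image (f := g) hinj]
  apply Finset.sum_le_sum_of_subset_of_nonneg
  · intro p hp
    simp only [Finset.mem_image, Finset.mem_range] at hp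
    obtain ⟨t, ht, rfl⟩ := hp
    simp only [Finset.mem_product, Finset.mem_range]
    exact ⟨lt_of_le_of_lt (Nat.div_le_self t n) ht, Nat.mod_lt _ hn⟩
  · intro i _ _; exact hg i

theorem stmt_2 (h : ℝ) (hh : 0 < h) (n : ℕ) (hn : 1 ≤ n) (c : ℕ → ℝ)
    (hc : ∀ j, j < n → c j ≠ 1 / h)
    (he0 : 0 < |eExp h n (fun j => -c j)|) (he1 : |eExp h n (fun j => -c j)| ≠ 1) :
    ∀ f : ℕ → ℝ, ∀ ε : ℝ, 0 < ε → ∀ η : ℕ → ℝ,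
      (∀ k, |hDiff h η k + cyc n c k * η k - f k| ≤ ε) →
      ∃ y : ℕ → ℝ, (∀ k, hDiff h y k + cyc n c k * y k = f k) ∧
        ∀ k, |η k - y k| ≤ K0 h n (fun j => -c j) * ε := by
  intro f ε hε η hη
  have hn0 : 0 < n := hn
  have hhne : h ≠ 0 := ne_of_gt hh
  set E : ℝ := eExp h n (fun j => -c j) with hEdef
  set a : ℕ → ℝ := fun k => 1 + h * -(c (k % n)) with hadef
  have hane : ∀ k, a k ≠ 0 := by
    intro k
    have hkn : k % n < n := Nat.mod_lt k hn0
    have hne := hc (k % n) hkn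
    simp only [hadef]
    intro hcon
    apply hne
    field_simp
    linear_combination -hcon
  -- periodicity of a
  have hap : ∀ k m, a (k + m * n) = a k := by
    intro k m
    simp only [hadef, Nat.add_mul_mod_self_right]
  have hapn : ∀ k, a (k + n) = a k := by
    intro k
    have := hap k 1
    simpa using this
  -- product over one period
  have prodA : ∀ k, ∏ i ∈ range n, a (k + i) = E := by
    intro k
    induction k with
    | zero =>
      simp only [hEdef, eExp, Nat.zero_add]
      refine Finset.prod_congr rfl fun i hi => ?_
      simp [hadef, Nat.mod_eq_of_lt (Finset.mem_range.1 hi)]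
    | succ k ih =>
      have h2 := Finset.prod_range_succ' (fun i => a (k + i)) n
      have h1 := Finset.prod_range_succ (fun i => a (k + i)) n
      have h3 : (∏ i ∈ range n, a (k + 1 + i)) * a k = (∏ i ∈ range n, a (k + i)) * a k := by
        calc (∏ i ∈ range n, a (k + 1 + i)) * a k
            = (∏ i ∈ range n, a (k + (i + 1))) * a (k + 0) := by
              rw [Nat.add_zero]
              congr 1
              exact Finset.prod_congr rfl fun i _ => by rw [Nat.add_comm i 1, ← Nat.add_assoc]
          _ = ∏ i ∈ range (n + 1), a (k + i) := h2.symm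
          _ = (∏ i ∈ range n, a (k + i)) * a (k + n) := h1
          _ = (∏ i ∈ range n, a (k + i)) * a k := by rw [hapn k]
      rw [mul_right_cancel₀ (hane k) h3, ih]
  have prodIco : ∀ b m, ∏ i ∈ Ico b (b + m * n), a i = E ^ m := by
    intro b m
    induction m with
    | zero => simp
    | succ m ih =>
      have hb : b + (m + 1) * n = (b + m * n) + n := by ring
      rw [hb, ← Finset.prod_Ico_consecutive a (Nat.le_add_right b (m * n)) (Nat.le_add_right _ n),
        ih, Finset.prod_Ico_eq_prod_range]
      have hbn : (b + m * n) + n - (b + m * n) = n := by omega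
      rw [hbn, prodA, pow_succ]
  have hEne : E ≠ 0 := by
    intro h0
    rw [h0] at he0
    simp at he0
  -- the reciprocal-product G
  set G : ℕ → ℕ → ℝ := fun k t => ∏ i ∈ range t, |a (k + i)|⁻¹ with hGdef
  have hGnn : ∀ k t, 0 ≤ G k t :=
    fun k t => Finset.prod_nonneg fun i _ => inv_nonneg.2 (abs_nonneg _)
  have hprodrange : ∀ k m, ∏ i ∈ range (m * n), a (k + i) = E ^ m := by
    intro k m
    have := prodIco k m
    rw [Finset.prod_Ico_eq_prod_range] at this
    simpa using this
  have hGsplit : ∀ k m s, G k (m * n + s) = (|E|⁻¹) ^ m * G k s := by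
    intro k m s
    simp only [hGdef]
    rw [Finset.prod_range_add]
    congr 1
    · calc ∏ i ∈ range (m * n), |a (k + i)|⁻¹
          = (∏ i ∈ range (m * n), |a (k + i)|)⁻¹ := Finset.prod_inv_distrib _
        _ = |∏ i ∈ range (m * n), a (k + i)|⁻¹ := by rw [Finset.abs_prod]
        _ = (|E|⁻¹) ^ m := by rw [hprodrange, abs_pow, inv_pow]
    · exact Finset.prod_congr rfl fun i _ => by
        rw [show k + (m * n + i) = (k + i) + m * n by ring, hap]
  have hGS : ∀ k, ∑ j ∈ range n, G k (j + 1) = Ssum h n (fun j => -c j) k := by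
    intro k
    simp only [hGdef, hadef, Ssum, one_div]
  have hSmod : ∀ k, Ssum h n (fun j => -c j) k = Ssum h n (fun j => -c j) (k % n) := by
    intro k
    unfold Ssum
    refine Finset.sum_congr rfl fun j _ => Finset.prod_congr rfl fun i _ => ?_
    rw [Nat.mod_add_mod]
  have hSsup : ∀ k, Ssum h n (fun j => -c j) k ≤ ⨆ m : Fin n, Ssum h n (fun j => -c j) (m : ℕ) := by
    intro k
    rw [hSmod k]
    exact le_ciSup (f := fun m : Fin n => Ssum h n (fun j => -c j) (m : ℕ))
      (Set.Finite.bddAbove (Set.finite_range _)) ⟨k % n, Nat.mod_lt k hn0⟩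
  -- sum of G(k, j+1) reversed
  have hGrev : ∀ k, ∑ s ∈ range n, G k (n - s) = Ssum h n (fun j => -c j) k := by
    intro k
    rw [← hGS k, ← Finset.sum_range_reflect (fun j => G k (j + 1)) n]
    refine Finset.sum_congr rfl fun s hs => ?_
    have : n - 1 - s + 1 = n - s := by
      have := Finset.mem_range.1 hs
      omega
    rw [this]
  -- defect
  set r : ℕ → ℝ := fun k => hDiff h η k + cyc n c k * η k - f k with hrdef
  have hre : ∀ k, |r k| ≤ ε := hη
  have hηrec : ∀ k, η (k + 1) = a k * η k + h * (f k + r k) := by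
    intro k
    simp only [hrdef, hadef, hDiff, cyc]
    field_simp
    ring
  have hsolve : ∀ y : ℕ → ℝ, (∀ k, y (k + 1) = a k * y k + h * f k) →
      ∀ k, hDiff h y k + cyc n c k * y k = f k := by
    intro y hy k
    simp only [hDiff, cyc]
    rw [hy k]
    simp only [hadef]
    field_simp
    ring
  -- it suffices to construct u with the recurrence and the bound
  have hmain : ∀ u : ℕ → ℝ, (∀ k, u (k + 1) = a k * u k + h * r k) →
      (∀ k, |u k| ≤ K0 h n (fun j => -c j) * ε) →
      ∃ y : ℕ → ℝ, (∀ k, hDiff h y k + cyc n c k * y k = f k) ∧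
        ∀ k, |η k - y k| ≤ K0 h n (fun j => -c j) * ε := by
    intro u hu hub
    refine ⟨fun k => η k - u k, hsolve _ fun k => ?_, fun k => by simpa using hub k⟩
    rw [hηrec k, hu k]
    ring
  rcases lt_or_gt_of_ne he1 with hlt | hgt
  · -- case |E| < 1
    set u : ℕ → ℝ := fun k => h * ∑ j ∈ range k, (∏ i ∈ Ico (j + 1) k, a i) * r j with hudef
    apply hmain u
    · intro k
      simp only [hudef]
      rw [Finset.sum_range_succ, Finset.Ico_self, Finset.prod_empty, one_mul]
      have hcongr : ∀ j ∈ range k, (∏ i ∈ Ico (j + 1) (k + 1), a i) * r j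
          = a k * ((∏ i ∈ Ico (j + 1) k, a i) * r j) := by
        intro j hj
        rw [Finset.prod_Ico_succ_top (Finset.mem_range.1 hj) a]
        ring
      rw [Finset.sum_congr rfl hcongr, ← Finset.mul_sum]
      ring
    · intro k
      -- |u k| ≤ h * ε * Σ_{t<k} ∏_{Ico(k-t,k)}|a|
      have hb1 : |u k| ≤ h * ((∑ j ∈ range k, ∏ i ∈ Ico (j + 1) k, |a i|) * ε) := by
        simp only [hudef]
        rw [abs_mul, abs_of_pos hh, Finset.sum_mul]
        refine mul_le_mul_of_nonneg_left ?_ (le_of_lt hh)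
        calc |∑ j ∈ range k, (∏ i ∈ Ico (j + 1) k, a i) * r j|
            ≤ ∑ j ∈ range k, |(∏ i ∈ Ico (j + 1) k, a i) * r j| :=
              Finset.abs_sum_le_sum_abs _ _
          _ ≤ ∑ j ∈ range k, (∏ i ∈ Ico (j + 1) k, |a i|) * ε := by
              refine Finset.sum_le_sum fun j _ => ?_
              rw [abs_mul, Finset.abs_prod]
              exact mul_le_mul_of_nonneg_left (hre j)
                (Finset.prod_nonneg fun i _ => abs_nonneg _)
      -- reflect the sum
      have hrefl : ∑ j ∈ range k, ∏ i ∈ Ico (j + 1) k, |a i|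
          = ∑ t ∈ range k, ∏ i ∈ Ico (k - t) k, |a i| := by
        rw [← Finset.sum_range_reflect (fun j => ∏ i ∈ Ico (j + 1) k, |a i|) k]
        refine Finset.sum_congr rfl fun t ht => ?_
        have : k - 1 - t + 1 = k - t := by
          have := Finset.mem_range.1 ht
          omega
        rw [this]
      -- identify each term
      have hterm : ∀ t, t ≤ k → ∏ i ∈ Ico (k - t) k, |a i|
          = |E| ^ (t / n) * (|E| * G k (n - t % n)) := by
        intro t htk
        obtain ⟨q, s, hsn, rfl⟩ : ∃ q s, s < n ∧ t = s + q * n :=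
          ⟨t / n, t % n, Nat.mod_lt t hn0, by
            have := Nat.div_add_mod' t n
            omega⟩
        have hqd : (s + q * n) / n = q := by
          rw [Nat.add_mul_div_right _ _ hn0, Nat.div_eq_of_lt hsn, Nat.zero_add]
        have hmd : (s + q * n) % n = s := by
          rw [Nat.add_mul_mod_self_right, Nat.mod_eq_of_lt hsn]
        rw [hqd, hmd]
        have hsle : s ≤ k := by omega
        -- split off full periods at the front
        have hsplit1 : (∏ i ∈ Ico (k - (s + q * n)) (k - s), |a i|) * ∏ i ∈ Ico (k - s) k, |a i|
            = ∏ i ∈ Ico (k - (s + q * n)) k, |a i| :=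
          Finset.prod_Ico_consecutive _ (by omega) (by omega)
        have hfull : ∏ i ∈ Ico (k - (s + q * n)) (k - s), |a i| = |E| ^ q := by
          have hbd : k - (s + q * n) + q * n = k - s := by omega
          have := congrArg abs (prodIco (k - (s + q * n)) q)
          rw [Finset.abs_prod, abs_pow, hbd] at this
          exact this
        have htail : ∏ i ∈ Ico (k - s) k, |a i| = |E| * G k (n - s) := by
          have hc1 : (∏ i ∈ Ico (k - s) k, |a i|) * ∏ i ∈ Ico k (k + (n - s)), |a i|
              = ∏ i ∈ Ico (k - s) (k + (n - s)), |a i| :=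
            Finset.prod_Ico_consecutive _ (Nat.sub_le k s) (Nat.le_add_right k _)
          have hperiod : ∏ i ∈ Ico (k - s) (k + (n - s)), |a i| = |E| := by
            have hlen : k + (n - s) = (k - s) + n := by omega
            have := congrArg abs (prodA (k - s))
            rw [Finset.abs_prod] at this
            rw [hlen, Finset.prod_Ico_eq_prod_range]
            simpa using this
          have hGinv : ∏ i ∈ Ico k (k + (n - s)), |a i| = (G k (n - s))⁻¹ := by
            simp only [hGdef]
            rw [Finset.prod_Ico_eq_prod_range, Finset.prod_inv_distrib, inv_inv]
            simp
          have hGpos : 0 < G k (n - s) := by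
            simp only [hGdef]
            exact Finset.prod_pos fun i _ => inv_pos.2 (abs_pos.2 (hane _))
          rw [hGinv] at hc1
          rw [hperiod] at hc1
          field_simp at hc1 ⊢
          linarith [hc1]
        rw [← hsplit1, hfull, htail]
      -- bound the reflected sum via the product grid
      have habs1 : 0 < |E| := he0
      have hsum2 : ∑ t ∈ range k, ∏ i ∈ Ico (k - t) k, |a i|
          ≤ (1 - |E|)⁻¹ * (|E| * Ssum h n (fun j => -c j) k) := by
        have heq : ∀ t ∈ range k, ∏ i ∈ Ico (k - t) k, |a i|
            = (fun p : ℕ × ℕ => |E| ^ p.1 * (|E| * G k (n - p.2))) (t / n, t % n) := by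
          intro t ht
          exact hterm t (le_of_lt (Finset.mem_range.1 ht))
        rw [Finset.sum_congr rfl heq]
        calc ∑ t ∈ range k, (fun p : ℕ × ℕ => |E| ^ p.1 * (|E| * G k (n - p.2))) (t / n, t % n)
            ≤ ∑ p ∈ range k ×ˢ range n, |E| ^ p.1 * (|E| * G k (n - p.2)) := by
              refine imageSum hn0 (fun p : ℕ × ℕ => |E| ^ p.1 * (|E| * G k (n - p.2)))
                (fun p => ?_) k
              exact mul_nonneg (pow_nonneg (abs_nonneg _) _)
                (mul_nonneg (abs_nonneg _) (hGnn _ _))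
          _ = (∑ m ∈ range k, |E| ^ m) * ∑ s ∈ range n, |E| * G k (n - s) := by
              rw [Finset.sum_mul_sum, Finset.sum_product]
          _ ≤ (1 - |E|)⁻¹ * (|E| * Ssum h n (fun j => -c j) k) := by
              rw [← Finset.mul_sum, hGrev]
              refine mul_le_mul_of_nonneg_right (geomB (abs_nonneg _) hlt k) ?_
              exact mul_nonneg (abs_nonneg _)
                ((hGrev k ▸ Finset.sum_nonneg fun s _ => hGnn _ _))
      -- assemble
      have hSk : Ssum h n (fun j => -c j) k ≤ ⨆ m : Fin n, Ssum h n (fun j => -c j) (m : ℕ) :=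
        hSsup k
      have hden : abs (1 - |E|) = 1 - |E| := abs_of_pos (by linarith)
      calc |u k| ≤ h * ((∑ j ∈ range k, ∏ i ∈ Ico (j + 1) k, |a i|) * ε) := hb1
        _ = h * ((∑ t ∈ range k, ∏ i ∈ Ico (k - t) k, |a i|) * ε) := by rw [hrefl]
        _ ≤ h * (((1 - |E|)⁻¹ * (|E| * Ssum h n (fun j => -c j) k)) * ε) := by
            refine mul_le_mul_of_nonneg_left (mul_le_mul_of_nonneg_right hsum2 (le_of_lt hε))
              (le_of_lt hh)
        _ = (h * |E| / abs (1 - |E|)) * Ssum h n (fun j => -c j) k * ε := by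
            rw [hden]
            have : (1:ℝ) - |E| ≠ 0 := by linarith
            field_simp
        _ ≤ K0 h n (fun j => -c j) * ε := by
            rw [K0]
            refine mul_le_mul_of_nonneg_right ?_ (le_of_lt hε)
            rw [← hEdef]
            refine mul_le_mul_of_nonneg_left hSk ?_
            positivity
  · -- case |E| > 1
    have hrinv : |E|⁻¹ < 1 := by
      rw [inv_lt_one_iff₀]
      right; exact hgt
    have hrinv0 : (0:ℝ) ≤ |E|⁻¹ := inv_nonneg.2 (abs_nonneg _)
    set w : ℕ → ℕ → ℝ := fun k t => (∏ i ∈ range (t + 1), (a (k + i))⁻¹) * r (k + t) with hwdef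
    have hwabs : ∀ k t, |w k t| ≤ G k (t + 1) * ε := by
      intro k t
      simp only [hwdef, hGdef]
      rw [abs_mul, Finset.abs_prod]
      refine mul_le_mul (le_of_eq ?_) (hre _) (abs_nonneg _) (hGnn k (t + 1))
      exact Finset.prod_congr rfl fun i _ => abs_inv _
    have hGbound : ∀ k N, ∑ t ∈ range N, G k (t + 1)
        ≤ (1 - |E|⁻¹)⁻¹ * Ssum h n (fun j => -c j) k := by
      intro k N
      have heq : ∀ t ∈ range N, G k (t + 1)
          = (fun p : ℕ × ℕ => (|E|⁻¹) ^ p.1 * G k (p.2 + 1)) (t / n, t % n) := by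
        intro t _
        have hkey : t / n * n + (t % n + 1) = t + 1 := by
          have := Nat.div_add_mod' t n
          omega
        calc G k (t + 1) = G k (t / n * n + (t % n + 1)) := by rw [hkey]
          _ = (|E|⁻¹) ^ (t / n) * G k (t % n + 1) := hGsplit k (t / n) (t % n + 1)
      rw [Finset.sum_congr rfl heq]
      calc ∑ t ∈ range N, (fun p : ℕ × ℕ => (|E|⁻¹) ^ p.1 * G k (p.2 + 1)) (t / n, t % n)
          ≤ ∑ p ∈ range N ×ˢ range n, (|E|⁻¹) ^ p.1 * G k (p.2 + 1) := by
            refine imageSum hn0 (fun p : ℕ × ℕ => (|E|⁻¹) ^ p.1 * G k (p.2 + 1))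
              (fun p => ?_) N
            exact mul_nonneg (pow_nonneg hrinv0 _) (hGnn _ _)
        _ = (∑ m ∈ range N, (|E|⁻¹) ^ m) * ∑ s ∈ range n, G k (s + 1) := by
            rw [Finset.sum_mul_sum, Finset.sum_product]
        _ ≤ (1 - |E|⁻¹)⁻¹ * Ssum h n (fun j => -c j) k := by
            rw [hGS]
            refine mul_le_mul_of_nonneg_right (geomB hrinv0 hrinv N) ?_
            rw [← hGS]
            exact Finset.sum_nonneg fun s _ => hGnn _ _
    have hwsumabs : ∀ k, Summable (fun t => |w k t|) := by
      intro k
      refine summable_of_sum_range_le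
        (c := ((1 - |E|⁻¹)⁻¹ * Ssum h n (fun j => -c j) k) * ε)
        (fun t => abs_nonneg _) (fun N => ?_)
      calc ∑ t ∈ range N, |w k t| ≤ ∑ t ∈ range N, G k (t + 1) * ε :=
            Finset.sum_le_sum fun t _ => hwabs k t
        _ = (∑ t ∈ range N, G k (t + 1)) * ε := by rw [Finset.sum_mul]
        _ ≤ ((1 - |E|⁻¹)⁻¹ * Ssum h n (fun j => -c j) k) * ε :=
            mul_le_mul_of_nonneg_right (hGbound k N) (le_of_lt hε)
    have hwsum : ∀ k, Summable (w k) := fun k => (hwsumabs k).of_abs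
    set u : ℕ → ℝ := fun k => -h * ∑' t, w k t with hudef
    apply hmain u
    · intro k
      have hsplit : ∑' t, w k t = w k 0 + ∑' t, w k (t + 1) := Summable.tsum_eq_zero_add (hwsum k)
      have hshift : ∀ t, w k (t + 1) = (a k)⁻¹ * w (k + 1) t := by
        intro t
        simp only [hwdef]
        rw [Finset.prod_range_succ' (fun i => (a (k + i))⁻¹) (t + 1)]
        have h1 : ∀ i, k + (i + 1) = k + 1 + i := by intro i; omega
        have h2 : k + (t + 1) = k + 1 + t := by omega
        rw [h2]
        have h3 : ∏ i ∈ range (t + 1), (a (k + (i + 1)))⁻¹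
            = ∏ i ∈ range (t + 1), (a (k + 1 + i))⁻¹ :=
          Finset.prod_congr rfl fun i _ => by rw [h1 i]
        rw [h3]
        simp only [Nat.add_zero]
        ring
      have htail : ∑' t, w k (t + 1) = (a k)⁻¹ * ∑' t, w (k + 1) t := by
        calc ∑' t, w k (t + 1) = ∑' t, (a k)⁻¹ * w (k + 1) t := by
              exact tsum_congr hshift
          _ = (a k)⁻¹ * ∑' t, w (k + 1) t := tsum_mul_left
      have hw0 : w k 0 = (a k)⁻¹ * r k := by
        simp only [hwdef]
        simp
      simp only [hudef]
      rw [hsplit, htail, hw0]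
      have hak := hane k
      field_simp
      ring
    · intro k
      have hb1 : |u k| ≤ h * ∑' t, |w k t| := by
        simp only [hudef]
        rw [abs_mul, abs_neg, abs_of_pos hh]
        refine mul_le_mul_of_nonneg_left ?_ (le_of_lt hh)
        have := norm_tsum_le_tsum_norm (f := w k) (by simpa [Real.norm_eq_abs] using hwsumabs k)
        simpa [Real.norm_eq_abs] using this
      have hb2 : ∑' t, |w k t| ≤ ((1 - |E|⁻¹)⁻¹ * Ssum h n (fun j => -c j) k) * ε := by
        refine Summable.tsum_le_of_sum_range_le (hwsumabs k) (fun N => ?_)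
        calc ∑ t ∈ range N, |w k t| ≤ ∑ t ∈ range N, G k (t + 1) * ε :=
              Finset.sum_le_sum fun t _ => hwabs k t
          _ = (∑ t ∈ range N, G k (t + 1)) * ε := by rw [Finset.sum_mul]
          _ ≤ ((1 - |E|⁻¹)⁻¹ * Ssum h n (fun j => -c j) k) * ε :=
              mul_le_mul_of_nonneg_right (hGbound k N) (le_of_lt hε)
      have hden : abs (1 - |E|) = |E| - 1 := by
        rw [abs_of_neg (by linarith : (1:ℝ) - |E| < 0)]
        ring
      have hconst : h * (1 - |E|⁻¹)⁻¹ = h * |E| / abs (1 - |E|) := by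
        rw [hden]
        have h1 : |E| - 1 ≠ 0 := by
          intro h0
          apply he1
          linarith
        have h2 : |E| ≠ 0 := by positivity
        field_simp
      calc |u k| ≤ h * ∑' t, |w k t| := hb1
        _ ≤ h * (((1 - |E|⁻¹)⁻¹ * Ssum h n (fun j => -c j) k) * ε) :=
            mul_le_mul_of_nonneg_left hb2 (le_of_lt hh)
        _ = (h * (1 - |E|⁻¹)⁻¹) * Ssum h n (fun j => -c j) k * ε := by ring
        _ = (h * |E| / abs (1 - |E|)) * Ssum h n (fun j => -c j) k * ε := by rw [hconst]
        _ ≤ K0 h n (fun j => -c j) * ε := by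
            rw [K0]
            refine mul_le_mul_of_nonneg_right ?_ (le_of_lt hε)
            rw [← hEdef]
            refine mul_le_mul_of_nonneg_left (hSsup k) ?_
            positivity
end

section
/- Assume h > 0, n ≥ 1, and λ_0, …, λ_{n−1} are real numbers with λ_j ≠ 1/h and λ_j ≠ −1/h for all j, such that 0 < |e_λ(nh)| ≠ 1 and 0 < |e_{−λ}(nh)| ≠ 1. Then for every f : ℕ → ℝ, the non-homogeneous discrete Hill-type equation Δ²_h y(k) + [Δ_h λ(k) − λ(k)λ(k+1)]·y(k) = f(k) is Hyers–Ulam stable on ℕ with Hyers–Ulam stability constant L = K_0(λ)·K_0(−λ): for every ε > 0 and every ξ : ℕ → ℝ satisfying |Δ²_h ξ(k) + [Δ_h λ(k) − λ(k)λ(k+1)]·ξ(k) − f(k)| ≤ ε for all k ∈ ℕ, there exists y : ℕ → ℝ solving the equation for all k ∈ ℕ with |ξ(k) − y(k)| ≤ K_0(λ)·K_0(−λ)·ε for all k ∈ ℕ. -/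
open Finset

namespace HillAux

/-- Forward product of `|a|` over `m` steps starting at `k`. -/
noncomputable def Qp (a : ℕ → ℝ) (k m : ℕ) : ℝ := ∏ i ∈ Finset.range m, |a (k + i)|

/-- Forward product of `|a|⁻¹` over `m` steps starting at `k`. -/
noncomputable def Pp (a : ℕ → ℝ) (k m : ℕ) : ℝ := ∏ i ∈ Finset.range m, |a (k + i)|⁻¹

/-- The `S` sum based at `k`. -/
noncomputable def Sp (a : ℕ → ℝ) (n k : ℕ) : ℝ := ∑ j ∈ Finset.range n, Pp a k (j + 1)

variable {a : ℕ → ℝ} {n : ℕ}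

lemma Qp_pos (ha : ∀ k, a k ≠ 0) (k m : ℕ) : 0 < Qp a k m :=
  Finset.prod_pos fun _ _ => abs_pos.2 (ha _)

lemma Pp_pos (ha : ∀ k, a k ≠ 0) (k m : ℕ) : 0 < Pp a k m :=
  Finset.prod_pos fun _ _ => inv_pos.2 (abs_pos.2 (ha _))

lemma Sp_nonneg (ha : ∀ k, a k ≠ 0) (k : ℕ) : 0 ≤ Sp a n k :=
  Finset.sum_nonneg fun _ _ => (Pp_pos ha k _).le

lemma Pp_eq_inv (k m : ℕ) : Pp a k m = (Qp a k m)⁻¹ := by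
  rw [Pp, Qp, Finset.prod_inv_distrib]

lemma Qp_add (k m u : ℕ) : Qp a k (m + u) = Qp a k m * Qp a (k + m) u := by
  rw [Qp, Finset.prod_range_add]
  congr 1
  exact Finset.prod_congr rfl fun i _ => by rw [add_assoc]

lemma Pp_add (k m u : ℕ) : Pp a k (m + u) = Pp a k m * Pp a (k + m) u := by
  rw [Pp, Finset.prod_range_add]
  congr 1
  exact Finset.prod_congr rfl fun i _ => by rw [add_assoc]

lemma Qp_succ (k m : ℕ) : Qp a k (m + 1) = Qp a k m * |a (k + m)| :=
  Finset.prod_range_succ _ _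

lemma prod_shift_of_ne (g : ℕ → ℝ) (hg : ∀ k, g k ≠ 0) (hper : ∀ k, g (k + n) = g k) :
    ∀ k, ∏ i ∈ Finset.range n, g (k + i) = ∏ i ∈ Finset.range n, g i := by
  intro k
  induction k with
  | zero => simp
  | succ k ih =>
    have e1 : ∏ i ∈ Finset.range (n + 1), g (k + i)
        = (∏ i ∈ Finset.range n, g (k + 1 + i)) * g k := by
      rw [Finset.prod_range_succ']
      congr 1
      exact Finset.prod_congr rfl fun i _ => by congr 1; omega
    have e2 : ∏ i ∈ Finset.range (n + 1), g (k + i)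
        = (∏ i ∈ Finset.range n, g (k + i)) * g k := by
      rw [Finset.prod_range_succ, hper]
    rw [← ih]
    exact mul_right_cancel₀ (hg k) (e1.symm.trans e2)

lemma Qp_period (hper : ∀ k, a (k + n) = a k) (ha : ∀ k, a k ≠ 0) (k : ℕ) :
    Qp a k n = Qp a 0 n := by
  have := prod_shift_of_ne (n := n) (fun i => |a i|)
    (fun k => abs_ne_zero.2 (ha k)) (fun k => congrArg (fun x => |x|) (hper k)) k
  simpa [Qp] using this

lemma Qp_blocks (hper : ∀ k, a (k + n) = a k) (ha : ∀ k, a k ≠ 0) (k q : ℕ) :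
    Qp a k (q * n) = (Qp a 0 n) ^ q := by
  induction q with
  | zero => simp [Qp]
  | succ q ih =>
    rw [show (q + 1) * n = q * n + n by ring, Qp_add, ih, Qp_period hper ha (k + q * n), pow_succ]

lemma Pp_shift (hper : ∀ k, a (k + n) = a k) (k m : ℕ) : Pp a (k + n) m = Pp a k m := by
  unfold Pp
  exact Finset.prod_congr rfl fun i _ => by rw [show k + n + i = k + i + n by omega, hper]

lemma Pp_shift_mul (hper : ∀ k, a (k + n) = a k) (k q m : ℕ) :
    Pp a (k + q * n) m = Pp a k m := by
  induction q with
  | zero => simp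
  | succ q ih => rw [show k + (q + 1) * n = k + q * n + n by ring, Pp_shift hper, ih]

lemma Pp_blocks (hper : ∀ k, a (k + n) = a k) (ha : ∀ k, a k ≠ 0) (k q : ℕ) :
    Pp a k (q * n) = ((Qp a 0 n)⁻¹) ^ q := by
  rw [Pp_eq_inv, Qp_blocks hper ha, inv_pow]

lemma term_le_Sp (hn : 1 ≤ n) (ha : ∀ k, a k ≠ 0) (k u : ℕ) (hu1 : 1 ≤ u) (hun : u ≤ n) :
    Pp a k u ≤ Sp a n k := by
  have hu : u = (u - 1) + 1 := by omega
  rw [hu, Sp]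
  exact Finset.single_le_sum (f := fun j => Pp a k (j + 1))
    (fun j _ => (Pp_pos ha k _).le) (Finset.mem_range.2 (by omega))

lemma sum_reflect_Sp (k : ℕ) : ∑ s ∈ Finset.range n, Pp a k (n - s) = Sp a n k := by
  calc ∑ s ∈ Finset.range n, Pp a k (n - s)
      = ∑ s ∈ Finset.range n, Pp a k (n - 1 - s + 1) :=
        Finset.sum_congr rfl fun s hs => by
          congr 1; have := Finset.mem_range.1 hs; omega
    _ = ∑ j ∈ Finset.range n, Pp a k (j + 1) := Finset.sum_range_reflect (fun j => Pp a k (j + 1)) n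
    _ = Sp a n k := rfl

lemma geom_bound {r : ℝ} (h0 : 0 ≤ r) (h1 : r < 1) (N : ℕ) :
    ∑ q ∈ Finset.range N, r ^ q ≤ (1 - r)⁻¹ := by
  have hs := summable_geometric_of_lt_one h0 h1
  calc ∑ q ∈ Finset.range N, r ^ q ≤ ∑' q, r ^ q :=
        Summable.sum_le_tsum _ (fun i _ => pow_nonneg h0 i) hs
    _ = (1 - r)⁻¹ := tsum_geometric_of_lt_one h0 h1

/-- Case `E > 1`: decay bound for sums of inverse products. -/
lemma sumP_le (hn : 1 ≤ n) (hper : ∀ k, a (k + n) = a k) (ha : ∀ k, a k ≠ 0)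
    (hE : 1 < Qp a 0 n) (k N : ℕ) :
    ∑ j ∈ Finset.range N, Pp a k (j + 1) ≤ Sp a n k * (1 - (Qp a 0 n)⁻¹)⁻¹ := by
  set E := Qp a 0 n with hEdef
  have hE0 : 0 < E := Qp_pos ha 0 n
  have hρ0 : (0:ℝ) ≤ E⁻¹ := by positivity
  have hρ1 : E⁻¹ < 1 := inv_lt_one_of_one_lt₀ hE
  have hblocks : ∀ M : ℕ, ∑ j ∈ Finset.range (M * n), Pp a k (j + 1)
      = (∑ q ∈ Finset.range M, (E⁻¹) ^ q) * Sp a n k := by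
    intro M
    induction M with
    | zero => simp
    | succ M ih =>
      rw [show (M + 1) * n = M * n + n by ring, Finset.sum_range_add, ih]
      have hterm : ∀ s, s ∈ Finset.range n →
          Pp a k (M * n + s + 1) = (E⁻¹) ^ M * Pp a k (s + 1) := by
        intro s _
        rw [show M * n + s + 1 = M * n + (s + 1) by omega, Pp_add,
          Pp_blocks hper ha, Pp_shift_mul hper]
      rw [Finset.sum_congr rfl hterm, ← Finset.mul_sum]
      have : (∑ s ∈ Finset.range n, Pp a k (s + 1)) = Sp a n k := rfl
      rw [this, Finset.sum_range_succ]
      ring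
  have hsub : ∑ j ∈ Finset.range N, Pp a k (j + 1)
      ≤ ∑ j ∈ Finset.range (N * n), Pp a k (j + 1) := by
    apply Finset.sum_le_sum_of_subset_of_nonneg
    · exact Finset.range_subset_range.2 (by nlinarith)
    · exact fun i _ _ => (Pp_pos ha k _).le
  calc ∑ j ∈ Finset.range N, Pp a k (j + 1)
      ≤ (∑ q ∈ Finset.range N, (E⁻¹) ^ q) * Sp a n k := by rw [← hblocks]; exact hsub
    _ ≤ (1 - E⁻¹)⁻¹ * Sp a n k :=
        mul_le_mul_of_nonneg_right (geom_bound hρ0 hρ1 N) (Sp_nonneg ha k)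
    _ = Sp a n k * (1 - E⁻¹)⁻¹ := by ring

/-- Reversal identity: a backward product equals a power of `E` times an inverse product. -/
lemma Qp_rev (hn : 1 ≤ n) (hper : ∀ k, a (k + n) = a k) (ha : ∀ k, a k ≠ 0)
    (k m : ℕ) (hm : m ≤ k) :
    Qp a (k - m) m = (Qp a 0 n) ^ (m / n + 1) * Pp a k (n - m % n) := by
  have hdm := Nat.div_add_mod m n
  have hs : m % n < n := Nat.mod_lt _ (by omega)
  have hmu : m + (n - m % n) = (m / n + 1) * n := by
    have h1 : (m / n + 1) * n = n * (m / n) + n := by ring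
    have h2 : m + (n - m % n) = n * (m / n) + (m % n + (n - m % n)) := by omega
    rw [h1, h2, Nat.add_sub_cancel' hs.le]
  have h2 : (k - m) + m = k := Nat.sub_add_cancel hm
  have h3 : Qp a (k - m) (m + (n - m % n)) = Qp a (k - m) m * Qp a k (n - m % n) := by
    rw [Qp_add, h2]
  have h4 : Qp a (k - m) (m + (n - m % n)) = (Qp a 0 n) ^ (m / n + 1) := by
    rw [hmu, Qp_blocks hper ha]
  have hq : Qp a k (n - m % n) ≠ 0 := (Qp_pos ha _ _).ne'
  rw [Pp_eq_inv, eq_mul_inv_iff_mul_eq₀ hq, ← h3, h4]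

/-- Case `E < 1`: bound for sums of backward products. -/
lemma sumQ_le (hn : 1 ≤ n) (hper : ∀ k, a (k + n) = a k) (ha : ∀ k, a k ≠ 0)
    (hE : Qp a 0 n < 1) (k : ℕ) :
    ∑ m ∈ Finset.range k, Qp a (k - m) m
      ≤ Qp a 0 n * Sp a n k * (1 - Qp a 0 n)⁻¹ := by
  set E := Qp a 0 n with hEdef
  have hE0 : 0 < E := Qp_pos ha 0 n
  set g : ℕ → ℝ := fun m => E ^ (m / n + 1) * Pp a k (n - m % n) with hgdef
  have hgnn : ∀ m, 0 ≤ g m := fun m => mul_nonneg (pow_nonneg hE0.le _) (Pp_pos ha _ _).le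
  have e0 : ∑ m ∈ Finset.range k, Qp a (k - m) m = ∑ m ∈ Finset.range k, g m :=
    Finset.sum_congr rfl fun m hm => Qp_rev hn hper ha k m (Finset.mem_range.1 hm).le
  have e1 : ∑ m ∈ Finset.range k, g m ≤ ∑ m ∈ Finset.range (k * n), g m := by
    apply Finset.sum_le_sum_of_subset_of_nonneg
    · exact Finset.range_subset_range.2 (by nlinarith)
    · exact fun i _ _ => hgnn i
  have e2 : ∀ M : ℕ, ∑ m ∈ Finset.range (M * n), g m
      = (∑ q ∈ Finset.range M, E ^ (q + 1)) * Sp a n k := by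
    intro M
    induction M with
    | zero => simp
    | succ M ih =>
      rw [show (M + 1) * n = M * n + n by ring, Finset.sum_range_add, ih]
      have hterm : ∀ s, s ∈ Finset.range n → g (M * n + s) = E ^ (M + 1) * Pp a k (n - s) := by
        intro s hs
        have hs' := Finset.mem_range.1 hs
        have hdiv : (M * n + s) / n = M := by
          rw [show M * n + s = s + M * n by omega, Nat.add_mul_div_right _ _ (by omega : 0 < n),
            Nat.div_eq_of_lt hs', Nat.zero_add]
        have hmod : (M * n + s) % n = s := by
          rw [show M * n + s = s + M * n by omega, Nat.add_mul_mod_self_right,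
            Nat.mod_eq_of_lt hs']
        rw [hgdef]
        simp only []
        rw [hdiv, hmod]
      rw [Finset.sum_congr rfl hterm, ← Finset.mul_sum, sum_reflect_Sp, Finset.sum_range_succ]
      ring
  have e3 : (∑ q ∈ Finset.range k, E ^ (q + 1)) ≤ E * (1 - E)⁻¹ := by
    have : (∑ q ∈ Finset.range k, E ^ (q + 1)) = E * ∑ q ∈ Finset.range k, E ^ q := by
      rw [Finset.mul_sum]
      exact Finset.sum_congr rfl fun q _ => by ring
    rw [this]
    exact mul_le_mul_of_nonneg_left (geom_bound hE0.le hE k) hE0.le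
  calc ∑ m ∈ Finset.range k, Qp a (k - m) m
      = ∑ m ∈ Finset.range k, g m := e0
    _ ≤ ∑ m ∈ Finset.range (k * n), g m := e1
    _ = (∑ q ∈ Finset.range k, E ^ (q + 1)) * Sp a n k := e2 k
    _ ≤ (E * (1 - E)⁻¹) * Sp a n k := mul_le_mul_of_nonneg_right e3 (Sp_nonneg ha k)
    _ = E * Sp a n k * (1 - E)⁻¹ := by ring

/-- Recursively defined solution used in the contractive case. -/
noncomputable def recW (a r : ℕ → ℝ) (h : ℝ) : ℕ → ℝ
  | 0 => 0
  | k + 1 => a k * recW a r h k + h * r k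

/-- First-order Hyers–Ulam stability for periodic coefficients. -/
lemma FO (h : ℝ) (hh : 0 < h) (n : ℕ) (hn : 1 ≤ n) (a : ℕ → ℝ)
    (hper : ∀ k, a (k + n) = a k) (ha : ∀ k, a k ≠ 0)
    (hE1 : Qp a 0 n ≠ 1)
    (C ε : ℝ) (hε : 0 ≤ ε)
    (hC : ∀ k, h * Qp a 0 n / |1 - Qp a 0 n| * Sp a n k ≤ C)
    (r : ℕ → ℝ) (hr : ∀ k, |r k| ≤ ε) :
    ∃ w : ℕ → ℝ, (∀ k, w (k + 1) = a k * w k + h * r k) ∧ ∀ k, |w k| ≤ C * ε := by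
  set E := Qp a 0 n with hEdef
  have hE0 : 0 < E := Qp_pos ha 0 n
  rcases lt_or_gt_of_ne hE1 with hlt | hgt
  · -- E < 1 : forward recursion from 0
    set W := recW a r h with hWdef
    have hWrec : ∀ k, W (k + 1) = a k * W k + h * r k := fun k => rfl
    set T : ℕ → ℝ := fun k => ∑ j ∈ Finset.range k, Qp a (j + 1) (k - j - 1) with hTdef
    have hT0 : T 0 = 0 := by simp [hTdef]
    have hTsucc : ∀ k, T (k + 1) = |a k| * T k + 1 := by
      intro k
      have e1 : T (k + 1) = ∑ j ∈ Finset.range k, Qp a (j + 1) (k - j) + Qp a (k + 1) 0 := by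
        rw [hTdef]
        simp only []
        rw [Finset.sum_range_succ]
        congr 1
        · exact Finset.sum_congr rfl fun j hj => by
            congr 1; have := Finset.mem_range.1 hj; omega
        · congr 1; omega
      have e2 : ∀ j, j ∈ Finset.range k →
          Qp a (j + 1) (k - j) = Qp a (j + 1) (k - j - 1) * |a k| := by
        intro j hj
        have hjk := Finset.mem_range.1 hj
        conv_lhs => rw [show k - j = (k - j - 1) + 1 by omega]
        rw [Qp_succ, show j + 1 + (k - j - 1) = k by omega]
      rw [e1, Finset.sum_congr rfl e2]
      have : Qp a (k + 1) 0 = 1 := by simp [Qp]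
      rw [this, ← Finset.sum_mul]
      rw [hTdef]
      ring
    have hWb : ∀ k, |W k| ≤ h * T k * ε := by
      intro k
      induction k with
      | zero => simp [hWdef, recW, hT0]
      | succ k ih =>
        have e1 : |W (k + 1)| ≤ |a k| * |W k| + h * |r k| := by
          rw [hWrec k]
          calc |a k * W k + h * r k| ≤ |a k * W k| + |h * r k| := abs_add_le _ _
            _ = |a k| * |W k| + h * |r k| := by
                rw [abs_mul, abs_mul, abs_of_pos hh]
        have e2 : |a k| * |W k| ≤ |a k| * (h * T k * ε) :=
          mul_le_mul_of_nonneg_left ih (abs_nonneg _)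
        have e3 : h * |r k| ≤ h * ε := mul_le_mul_of_nonneg_left (hr k) hh.le
        have e4 : |a k| * (h * T k * ε) + h * ε = h * T (k + 1) * ε := by
          rw [hTsucc k]; ring
        linarith
    refine ⟨W, hWrec, fun k => ?_⟩
    have hTb : T k ≤ E * Sp a n k * (1 - E)⁻¹ := by
      have e0 : T k = ∑ m ∈ Finset.range k, Qp a (k - m) m := by
        rw [hTdef]
        simp only []
        rw [← Finset.sum_range_reflect (fun m => Qp a (k - m) m) k]
        exact Finset.sum_congr rfl fun j hj => by
          have := Finset.mem_range.1 hj
          congr 1 <;> omega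
      rw [e0]
      exact sumQ_le hn hper ha hlt k
    have habs : |1 - E| = 1 - E := abs_of_pos (by linarith)
    have step : h * T k * ε ≤ h * (E * Sp a n k * (1 - E)⁻¹) * ε := by
      apply mul_le_mul_of_nonneg_right _ hε
      exact mul_le_mul_of_nonneg_left hTb hh.le
    have eqC : h * (E * Sp a n k * (1 - E)⁻¹) * ε = (h * E / |1 - E| * Sp a n k) * ε := by
      rw [habs]; ring
    calc |W k| ≤ h * T k * ε := hWb k
      _ ≤ h * (E * Sp a n k * (1 - E)⁻¹) * ε := step
      _ = (h * E / |1 - E| * Sp a n k) * ε := eqC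
      _ ≤ C * ε := mul_le_mul_of_nonneg_right (hC k) hε
  · -- E > 1 : bounded solution via infinite series
    have hρ0 : (0:ℝ) ≤ E⁻¹ := by positivity
    have hρ1 : E⁻¹ < 1 := inv_lt_one_of_one_lt₀ hgt
    set F : ℕ → ℕ → ℝ := fun k j => r (k + j) * ∏ i ∈ Finset.range (j + 1), (a (k + i))⁻¹
      with hFdef
    have habsF : ∀ k j, |F k j| ≤ ε * Pp a k (j + 1) := by
      intro k j
      rw [hFdef]
      simp only []
      rw [abs_mul]
      have : |∏ i ∈ Finset.range (j + 1), (a (k + i))⁻¹| = Pp a k (j + 1) := by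
        rw [abs_prod, Pp]
        exact Finset.prod_congr rfl fun i _ => abs_inv _
      rw [this]
      exact mul_le_mul_of_nonneg_right (hr _) (Pp_pos ha k _).le
    have hpartial : ∀ k N, ∑ j ∈ Finset.range N, |F k j|
        ≤ ε * (Sp a n k * (1 - E⁻¹)⁻¹) := by
      intro k N
      calc ∑ j ∈ Finset.range N, |F k j|
          ≤ ∑ j ∈ Finset.range N, ε * Pp a k (j + 1) :=
            Finset.sum_le_sum fun j _ => habsF k j
        _ = ε * ∑ j ∈ Finset.range N, Pp a k (j + 1) := by rw [Finset.mul_sum]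
        _ ≤ ε * (Sp a n k * (1 - E⁻¹)⁻¹) :=
            mul_le_mul_of_nonneg_left (sumP_le hn hper ha hgt k N) hε
    have hsumabs : ∀ k, Summable fun j => |F k j| := fun k =>
      summable_of_sum_range_le (fun j => abs_nonneg _) (hpartial k)
    have hsum : ∀ k, Summable (F k) := fun k => (hsumabs k).of_abs
    set W : ℕ → ℝ := fun k => -(h * ∑' j, F k j) with hWdef
    have hWrec : ∀ k, W (k + 1) = a k * W k + h * r k := by
      intro k
      have key0 : a k * F k 0 = r k := by
        rw [hFdef]
        simp only []
        rw [Finset.prod_range_one, add_zero]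
        rw [show a k * (r k * (a k)⁻¹) = (a k * (a k)⁻¹) * r k by ring,
          mul_inv_cancel₀ (ha k), one_mul]
      have key : ∀ j, a k * F k (j + 1) = F (k + 1) j := by
        intro j
        rw [hFdef]
        simp only []
        have hp : ∏ i ∈ Finset.range (j + 2), (a (k + i))⁻¹
            = (∏ i ∈ Finset.range (j + 1), (a (k + 1 + i))⁻¹) * (a k)⁻¹ := by
          rw [Finset.prod_range_succ']
          congr 1
          exact Finset.prod_congr rfl fun i _ => by congr 2; omega
        rw [show j + 1 + 1 = j + 2 by omega, hp,
          show k + (j + 1) = k + 1 + j by omega]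
        rw [show a k * (r (k + 1 + j) * ((∏ i ∈ Finset.range (j + 1), (a (k + 1 + i))⁻¹) * (a k)⁻¹))
            = (a k * (a k)⁻¹) * (r (k + 1 + j) * ∏ i ∈ Finset.range (j + 1), (a (k + 1 + i))⁻¹) by ring,
          mul_inv_cancel₀ (ha k), one_mul]
      have e1 : a k * ∑' j, F k j = ∑' j, a k * F k j := (tsum_mul_left).symm
      have e2 : ∑' j, a k * F k j = a k * F k 0 + ∑' j, a k * F k (j + 1) := by
        exact Summable.tsum_eq_zero_add ((hsum k).mul_left _)
      have e3 : ∑' j, a k * F k (j + 1) = ∑' j, F (k + 1) j := by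
        exact tsum_congr fun j => key j
      have : a k * W k = W (k + 1) - h * r k := by
        rw [hWdef]
        simp only []
        rw [show a k * -(h * ∑' j, F k j) = -(h * (a k * ∑' j, F k j)) by ring,
          e1, e2, e3, key0]
        ring
      linarith
    refine ⟨W, hWrec, fun k => ?_⟩
    have habsW : |W k| = h * |∑' j, F k j| := by
      rw [hWdef]
      simp only []
      rw [abs_neg, abs_mul, abs_of_pos hh]
    have htsum : |∑' j, F k j| ≤ ε * (Sp a n k * (1 - E⁻¹)⁻¹) := by
      have h1 : |∑' j, F k j| ≤ ∑' j, |F k j| := by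
        have := norm_tsum_le_tsum_norm (f := F k) (by simpa [Real.norm_eq_abs] using hsumabs k)
        simpa [Real.norm_eq_abs] using this
      have h2 : ∑' j, |F k j| ≤ ε * (Sp a n k * (1 - E⁻¹)⁻¹) :=
        Summable.tsum_le_of_sum_range_le (hsumabs k) (hpartial k)
      linarith
    have hEne : E ≠ 0 := hE0.ne'
    have hEm1 : E - 1 ≠ 0 := sub_ne_zero.2 (ne_of_gt hgt)
    have habs : |1 - E| = E - 1 := by
      rw [abs_of_neg (by linarith : 1 - E < 0)]; ring
    have hinv : (1 - E⁻¹)⁻¹ = E / (E - 1) := by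
      rw [show 1 - E⁻¹ = (E - 1) / E by field_simp, inv_div]
    calc |W k| = h * |∑' j, F k j| := habsW
      _ ≤ h * (ε * (Sp a n k * (1 - E⁻¹)⁻¹)) :=
          mul_le_mul_of_nonneg_left htsum hh.le
      _ = (h * E / |1 - E| * Sp a n k) * ε := by rw [hinv, habs]; ring
      _ ≤ C * ε := mul_le_mul_of_nonneg_right (hC k) hε

/-- The factorisation identity for the discrete Hill operator. -/
lemma key_id (h : ℝ) (hh : h ≠ 0) (lam : ℕ → ℝ) (y : ℕ → ℝ) (k : ℕ) :
    hDiff h (fun m => hDiff h y m + lam m * y m) k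
      - lam (k + 1) * (hDiff h y k + lam k * y k)
    = hDiff h (hDiff h y) k + (hDiff h lam k - lam k * lam (k + 1)) * y k := by
  simp only [hDiff]
  field_simp
  ring

end HillAux

open HillAux

theorem stmt_4 (h : ℝ) (hh : 0 < h) (n : ℕ) (hn : 1 ≤ n) (c : ℕ → ℝ)
    (hc : ∀ j, j < n → c j ≠ 1 / h ∧ c j ≠ -1 / h)
    (he0 : 0 < |eExp h n c|) (he1 : |eExp h n c| ≠ 1)
    (hne0 : 0 < |eExp h n (fun j => -c j)|) (hne1 : |eExp h n (fun j => -c j)| ≠ 1) :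
    ∀ f : ℕ → ℝ, ∀ ε : ℝ, 0 < ε → ∀ ξ : ℕ → ℝ,
      (∀ k, |hDiff h (hDiff h ξ) k +
        (hDiff h (cyc n c) k - cyc n c k * cyc n c (k + 1)) * ξ k - f k| ≤ ε) →
      ∃ y : ℕ → ℝ,
        (∀ k, hDiff h (hDiff h y) k +
          (hDiff h (cyc n c) k - cyc n c k * cyc n c (k + 1)) * y k = f k) ∧
        ∀ k, |ξ k - y k| ≤ K0 h n c * K0 h n (fun j => -c j) * ε := by
  intro f ε hε ξ hξ
  have hn0 : 0 < n := hn
  -- the coefficient sequences are nonvanishing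
  have hane1 : ∀ j, j < n → 1 + h * c j ≠ 0 := by
    intro j hj heq
    exact (hc j hj).2 (by field_simp; linear_combination heq)
  have hane2 : ∀ j, j < n → 1 - h * c j ≠ 0 := by
    intro j hj heq
    exact (hc j hj).1 (by field_simp; linear_combination -heq)
  -- first-order coefficient sequences
  set a1 : ℕ → ℝ := fun k => 1 + h * c ((k + 1) % n) with ha1def
  set a2 : ℕ → ℝ := fun k => 1 - h * c (k % n) with ha2def
  have hper1 : ∀ k, a1 (k + n) = a1 k := by
    intro k
    simp only [ha1def]
    congr 2
    rw [show k + n + 1 = k + 1 + n by omega, Nat.add_mod_right]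
  have hper2 : ∀ k, a2 (k + n) = a2 k := by
    intro k
    simp only [ha2def]
    congr 2
    rw [Nat.add_mod_right]
  have ha1 : ∀ k, a1 k ≠ 0 := fun k => hane1 _ (Nat.mod_lt _ hn0)
  have ha2 : ∀ k, a2 k ≠ 0 := fun k => hane2 _ (Nat.mod_lt _ hn0)
  -- the period products equal the discrete exponentials
  have hQ1 : Qp a1 0 n = |eExp h n c| := by
    set g : ℕ → ℝ := fun i => |1 + h * c (i % n)| with hgdef
    have hgne : ∀ k, g k ≠ 0 := fun k => abs_ne_zero.2 (hane1 _ (Nat.mod_lt _ hn0))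
    have hgper : ∀ k, g (k + n) = g k := fun k => by
      simp only [hgdef]; rw [Nat.add_mod_right]
    have h1 := prod_shift_of_ne (n := n) g hgne hgper 1
    have h2 : Qp a1 0 n = ∏ i ∈ Finset.range n, g (1 + i) := by
      unfold Qp
      exact Finset.prod_congr rfl fun i _ => by
        simp only [ha1def, hgdef, zero_add, Nat.add_comm 1 i]
    have h3 : ∏ i ∈ Finset.range n, g i = |eExp h n c| := by
      rw [eExp, abs_prod]
      exact Finset.prod_congr rfl fun i hi => by
        simp only [hgdef]
        rw [Nat.mod_eq_of_lt (Finset.mem_range.1 hi)]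
    rw [h2, h1, h3]
  have hQ2 : Qp a2 0 n = |eExp h n (fun j => -c j)| := by
    rw [Qp, eExp, abs_prod]
    exact Finset.prod_congr rfl fun i hi => by
      simp only [ha2def, zero_add]
      rw [Nat.mod_eq_of_lt (Finset.mem_range.1 hi)]
      congr 1
      ring
  -- the S sums are bounded by the suprema in the K0 constants
  have hfac1 : 0 ≤ h * |eExp h n c| / abs (1 - |eExp h n c|) :=
    div_nonneg (mul_nonneg hh.le (abs_nonneg _)) (abs_nonneg _)
  have hfac2 : 0 ≤ h * |eExp h n (fun j => -c j)| / abs (1 - |eExp h n (fun j => -c j)|) :=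
    div_nonneg (mul_nonneg hh.le (abs_nonneg _)) (abs_nonneg _)
  have hSp1 : ∀ k, Sp a1 n k = Ssum h n c ((k + 1) % n) := by
    intro k
    unfold Sp Pp Ssum
    refine Finset.sum_congr rfl fun j _ => Finset.prod_congr rfl fun i _ => ?_
    rw [one_div, Nat.mod_add_mod, show k + 1 + i = k + i + 1 by omega]
  have hSp2 : ∀ k, Sp a2 n k = Ssum h n (fun j => -c j) (k % n) := by
    intro k
    unfold Sp Pp Ssum
    refine Finset.sum_congr rfl fun j _ => Finset.prod_congr rfl fun i _ => ?_
    rw [one_div, Nat.mod_add_mod]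
    simp only [ha2def]
    congr 2
    ring
  have hC1 : ∀ k, h * Qp a1 0 n / |1 - Qp a1 0 n| * Sp a1 n k ≤ K0 h n c := by
    intro k
    rw [hQ1, hSp1, K0]
    apply mul_le_mul_of_nonneg_left _ hfac1
    have hlt : (k + 1) % n < n := Nat.mod_lt _ hn0
    exact le_ciSup (f := fun m : Fin n => Ssum h n c (m : ℕ))
      (Set.Finite.bddAbove (Set.finite_range _)) (⟨(k + 1) % n, hlt⟩ : Fin n)
  have hC2 : ∀ k, h * Qp a2 0 n / |1 - Qp a2 0 n| * Sp a2 n k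
      ≤ K0 h n (fun j => -c j) := by
    intro k
    rw [hQ2, hSp2, K0]
    apply mul_le_mul_of_nonneg_left _ hfac2
    have hlt : k % n < n := Nat.mod_lt _ hn0
    exact le_ciSup (f := fun m : Fin n => Ssum h n (fun j => -c j) (m : ℕ))
      (Set.Finite.bddAbove (Set.finite_range _)) (⟨k % n, hlt⟩ : Fin n)
  -- first reduction: v approximately solves a first-order equation
  set v : ℕ → ℝ := fun m => hDiff h ξ m + cyc n c m * ξ m with hvdef
  set r1 : ℕ → ℝ := fun k => hDiff h v k - cyc n c (k + 1) * v k - f k with hr1def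
  have hr1 : ∀ k, |r1 k| ≤ ε := by
    intro k
    have hid := key_id h hh.ne' (cyc n c) ξ k
    have : r1 k = hDiff h (hDiff h ξ) k
        + (hDiff h (cyc n c) k - cyc n c k * cyc n c (k + 1)) * ξ k - f k := by
      rw [hr1def]
      simp only [hvdef]
      rw [← hid]
    rw [this]
    exact hξ k
  obtain ⟨w1, hw1rec, hw1b⟩ := FO h hh n hn a1 hper1 ha1 (by rw [hQ1]; exact he1)
    (K0 h n c) ε hε.le hC1 r1 hr1
  -- exact solution of the first-order equation
  set u : ℕ → ℝ := fun k => v k - w1 k with hudef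
  have hvrec : ∀ k, v (k + 1) = a1 k * v k + h * (f k + r1 k) := by
    intro k
    have e : (v (k + 1) - v k) / h - cyc n c (k + 1) * v k - f k = r1 k := rfl
    have e2 : v (k + 1) - v k = h * (cyc n c (k + 1) * v k + f k + r1 k) := by
      field_simp at e
      linarith
    have e3 : a1 k * v k = v k + h * (c ((k + 1) % n) * v k) := by
      simp only [ha1def]; ring
    have e4 : cyc n c (k + 1) = c ((k + 1) % n) := rfl
    rw [e4] at e2
    linarith [e2, e3]
  have hurec : ∀ k, u (k + 1) = a1 k * u k + h * f k := by
    intro k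
    have := hw1rec k
    have := hvrec k
    simp only [hudef]
    linarith [hw1rec k, hvrec k, mul_sub (a1 k) (v k) (w1 k)]
  -- second reduction: ξ approximately solves the other first-order equation
  have hξrec : ∀ k, ξ (k + 1) = a2 k * ξ k + h * (u k + w1 k) := by
    intro k
    have e : u k + w1 k = (ξ (k + 1) - ξ k) / h + cyc n c k * ξ k := by
      simp only [hudef, hvdef, hDiff]
      ring
    have e2 : cyc n c k = c (k % n) := rfl
    have e3 : a2 k * ξ k = ξ k - h * (c (k % n) * ξ k) := by
      simp only [ha2def]; ring
    have e4 : ξ (k + 1) - ξ k = h * (u k + w1 k - cyc n c k * ξ k) := by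
      rw [e, show (ξ (k + 1) - ξ k) / h + cyc n c k * ξ k - cyc n c k * ξ k
          = (ξ (k + 1) - ξ k) / h by ring, mul_comm, div_mul_cancel₀ _ hh.ne']
    rw [e2] at e4
    linarith [e3, e4]
  have hε2 : 0 ≤ K0 h n c * ε := le_trans (abs_nonneg _) (hw1b 0)
  obtain ⟨w2, hw2rec, hw2b⟩ := FO h hh n hn a2 hper2 ha2 (by rw [hQ2]; exact hne1)
    (K0 h n (fun j => -c j)) (K0 h n c * ε) hε2 hC2 w1 hw1b
  -- the exact solution of the second-order equation
  set y : ℕ → ℝ := fun k => ξ k - w2 k with hydef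
  have hyrec : ∀ k, y (k + 1) = a2 k * y k + h * u k := by
    intro k
    simp only [hydef]
    have := hξrec k
    have := hw2rec k
    have := mul_sub (a2 k) (ξ k) (w2 k)
    linarith [hξrec k, hw2rec k, mul_sub (a2 k) (ξ k) (w2 k)]
  have hyu : ∀ k, hDiff h y k + cyc n c k * y k = u k := by
    intro k
    have e := hyrec k
    have e2 : cyc n c k = c (k % n) := rfl
    simp only [ha2def] at e
    rw [hDiff, e2]
    field_simp
    linarith [e]
  have huf : ∀ k, hDiff h u k - cyc n c (k + 1) * u k = f k := by
    intro k
    have e := hurec k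
    have e2 : cyc n c (k + 1) = c ((k + 1) % n) := rfl
    simp only [ha1def] at e
    rw [hDiff, e2]
    field_simp
    linarith [e]
  refine ⟨y, ?_, ?_⟩
  · intro k
    have hid := key_id h hh.ne' (cyc n c) y k
    have hfun : (fun m => hDiff h y m + cyc n c m * y m) = u := funext hyu
    rw [← hid, hfun, hyu k]
    exact huf k
  · intro k
    have e : ξ k - y k = w2 k := by simp [hydef]
    rw [e]
    calc |w2 k| ≤ K0 h n (fun j => -c j) * (K0 h n c * ε) := hw2b k
      _ = K0 h n c * K0 h n (fun j => -c j) * ε := by ring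
end

section
/- Assume h > 0, n ≥ 1, and λ_0, …, λ_{n−1} are real numbers with λ_j ≠ 1/h and λ_j ≠ −1/h for all j, such that 0 < |e_λ(nh)| ≠ 1 and 0 < |e_{−λ}(nh)| ≠ 1. Define p(k) := λ(k+2), q(k) := 2·Δ_h λ(k+1) + Δ_h λ(k+2) − λ(k+2)λ(k+3), and r(k) := Δ²_h λ(k) + λ(k)·Δ_h λ(k+2) − λ(k)λ(k+2)λ(k+3). Then the third-order equation Δ³_h y(k) + p(k)Δ²_h y(k) + q(k)Δ_h y(k) + r(k)y(k) = 0 is Hyers–Ulam stable on ℕ with Hyers–Ulam stability constant K = K_0(λ)·(K_0(−λ))²: for every ε > 0 and every ξ : ℕ → ℝ satisfying |Δ³_h ξ(k) + p(k)Δ²_h ξ(k) + q(k)Δ_h ξ(k) + r(k)ξ(k)| ≤ ε for all k ∈ ℕ, there exists a solution y : ℕ → ℝ of the equation with |ξ(k) − y(k)| ≤ K_0(λ)·(K_0(−λ))²·ε for all k ∈ ℕ. -/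
lemma prod_mod_shift_one (n : ℕ) (hn : 1 ≤ n) (g : ℕ → ℝ) :
    ∏ k ∈ Finset.range n, g ((k + 1) % n) = ∏ k ∈ Finset.range n, g (k % n) := by
  obtain ⟨m, rfl⟩ : ∃ m, n = m + 1 := ⟨n - 1, by omega⟩
  rw [Finset.prod_range_succ, Nat.mod_self]
  rw [Finset.prod_congr rfl (fun k hk => by
    rw [Nat.mod_eq_of_lt (by have := Finset.mem_range.mp hk; omega)])]
  conv_rhs => rw [Finset.prod_congr rfl (fun k hk => by
    rw [Nat.mod_eq_of_lt (Finset.mem_range.mp hk)])]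
  rw [Finset.prod_range_succ']

lemma prod_mod_shift (n : ℕ) (hn : 1 ≤ n) (g : ℕ → ℝ) (s : ℕ) :
    ∏ k ∈ Finset.range n, g ((k + s) % n) = ∏ k ∈ Finset.range n, g (k % n) := by
  induction s generalizing g with
  | zero => simp
  | succ s ih =>
    have e1 : ∏ k ∈ Finset.range n, g ((k + (s+1)) % n)
        = ∏ k ∈ Finset.range n, (fun j => g ((j + 1) % n)) ((k + s) % n) := by
      refine Finset.prod_congr rfl fun k _ => ?_
      simp only [Nat.mod_add_mod]
      congr 1
    have e2 := ih (fun j => g ((j + 1) % n))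
    have e3 : ∏ k ∈ Finset.range n, (fun j => g ((j + 1) % n)) (k % n)
        = ∏ k ∈ Finset.range n, (fun j => g (j % n)) ((k + 1) % n) := by
      refine Finset.prod_congr rfl fun k _ => ?_
      simp only [Nat.mod_add_mod, Nat.mod_mod_of_dvd _ (dvd_refl n)]
    have e4 := prod_mod_shift_one n hn (fun j => g (j % n))
    have e5 : ∏ k ∈ Finset.range n, (fun j => g (j % n)) (k % n)
        = ∏ k ∈ Finset.range n, g (k % n) := by
      refine Finset.prod_congr rfl fun k _ => ?_
      simp only [Nat.mod_mod_of_dvd _ (dvd_refl n)]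
    rw [e1, e2, e3, e4, e5]

lemma sum_div_mod_bound (n : ℕ) (hn : 1 ≤ n) (ρ : ℝ) (h0 : 0 ≤ ρ) (h1 : ρ < 1)
    (g : ℕ → ℝ) (hg : ∀ t, 0 ≤ g t) (N : ℕ) :
    ∑ d ∈ Finset.range N, ρ ^ (d / n) * g (d % n)
      ≤ (1 - ρ)⁻¹ * ∑ t ∈ Finset.range n, g t := by
  have hinj : Set.InjOn (fun d : ℕ => (d / n, d % n)) (Finset.range N) := by
    intro a _ b _ hab
    have h1 := congrArg Prod.fst hab
    have h2 := congrArg Prod.snd hab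
    simp only at h1 h2
    calc a = n * (a / n) + a % n := (Nat.div_add_mod a n).symm
      _ = n * (b / n) + b % n := by rw [h1, h2]
      _ = b := Nat.div_add_mod b n
  have heq : ∑ d ∈ Finset.range N, ρ ^ (d / n) * g (d % n)
      = ∑ x ∈ (Finset.range N).image (fun d => (d / n, d % n)),
          ρ ^ x.1 * g x.2 := by
    rw [Finset.sum_image (fun a ha b hb hab => hinj ha hb hab)]
  rw [heq]
  have hsub : (Finset.range N).image (fun d => (d / n, d % n))
      ⊆ Finset.range N ×ˢ Finset.range n := by
    intro x hx
    obtain ⟨d, hd, rfl⟩ := Finset.mem_image.mp hx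
    have := Finset.mem_range.mp hd
    refine Finset.mem_product.mpr ⟨Finset.mem_range.mpr ?_, Finset.mem_range.mpr ?_⟩
    · exact lt_of_le_of_lt (Nat.div_le_self d n) this
    · exact Nat.mod_lt _ (by omega)
  calc ∑ x ∈ (Finset.range N).image (fun d => (d / n, d % n)), ρ ^ x.1 * g x.2
      ≤ ∑ x ∈ Finset.range N ×ˢ Finset.range n, ρ ^ x.1 * g x.2 := by
        refine Finset.sum_le_sum_of_subset_of_nonneg hsub fun x _ _ => ?_
        exact mul_nonneg (pow_nonneg h0 _) (hg _)
    _ = (∑ m ∈ Finset.range N, ρ ^ m) * ∑ t ∈ Finset.range n, g t := by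
        rw [Finset.sum_product, Finset.sum_mul]
        exact Finset.sum_congr rfl fun m _ => by rw [Finset.mul_sum]
    _ ≤ (1 - ρ)⁻¹ * ∑ t ∈ Finset.range n, g t := by
        refine mul_le_mul_of_nonneg_right ?_ (Finset.sum_nonneg fun t _ => hg t)
        exact Summable.sum_le_tsum (Finset.range N) (fun i _ => pow_nonneg h0 i)
          (summable_geometric_of_lt_one h0 h1) |>.trans_eq
          (tsum_geometric_of_lt_one h0 h1)

noncomputable def Phi (h : ℝ) (μ : ℕ → ℝ) (k : ℕ) : ℝ :=
  ∏ i ∈ Finset.range k, (1 + h * μ i)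

lemma Phi_succ (h : ℝ) (μ : ℕ → ℝ) (k : ℕ) :
    Phi h μ (k + 1) = Phi h μ k * (1 + h * μ k) := Finset.prod_range_succ _ _

lemma Phi_add (h : ℝ) (μ : ℕ → ℝ) (x m : ℕ) :
    Phi h μ (x + m) = Phi h μ x * ∏ i ∈ Finset.range m, (1 + h * μ (x + i)) :=
  Finset.prod_range_add _ _ _

lemma Phi_ne_zero (h : ℝ) (μ : ℕ → ℝ) (hnz : ∀ k, 1 + h * μ k ≠ 0) (k : ℕ) :
    Phi h μ k ≠ 0 := Finset.prod_ne_zero_iff.mpr fun i _ => hnz i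

lemma window_eq (h : ℝ) (n : ℕ) (μ : ℕ → ℝ)
    (hper : ∀ k, μ (k + n) = μ k) (hnz : ∀ k, 1 + h * μ k ≠ 0) (x : ℕ) :
    ∏ i ∈ Finset.range n, (1 + h * μ (x + i)) = ∏ i ∈ Finset.range n, (1 + h * μ i) := by
  induction x with
  | zero => simp
  | succ x ih =>
    have h1 := Finset.prod_range_succ (fun i => 1 + h * μ (x + i)) n
    have h2 : ∏ i ∈ Finset.range (n + 1), (1 + h * μ (x + i))
        = (∏ i ∈ Finset.range n, (1 + h * μ (x + 1 + i))) * (1 + h * μ (x + 0)) := by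
      rw [Finset.prod_range_succ']
      congr 1
      refine Finset.prod_congr rfl fun i _ => ?_
      rw [show x + (i + 1) = x + 1 + i from by omega]
    have h4 : (∏ i ∈ Finset.range n, (1 + h * μ (x + 1 + i))) * (1 + h * μ (x + 0))
        = (∏ i ∈ Finset.range n, (1 + h * μ (x + i))) * (1 + h * μ (x + n)) := by
      rw [← h2, h1]
    rw [hper x] at h4
    have h5 : (1 + h * μ (x + 0)) = (1 + h * μ x) := by norm_num
    rw [h5] at h4
    have := mul_right_cancel₀ (hnz x) h4
    rw [this, ih]

lemma Phi_window (h : ℝ) (n : ℕ) (μ : ℕ → ℝ)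
    (hper : ∀ k, μ (k + n) = μ k) (hnz : ∀ k, 1 + h * μ k ≠ 0) (x : ℕ) :
    Phi h μ (x + n) = Phi h μ x * ∏ i ∈ Finset.range n, (1 + h * μ i) := by
  rw [Phi_add, window_eq h n μ hper hnz]

lemma Phi_mul_pow (h : ℝ) (n : ℕ) (μ : ℕ → ℝ)
    (hper : ∀ k, μ (k + n) = μ k) (hnz : ∀ k, 1 + h * μ k ≠ 0) (x m : ℕ) :
    Phi h μ (x + n * m) = Phi h μ x * (∏ i ∈ Finset.range n, (1 + h * μ i)) ^ m := by
  induction m with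
  | zero => simp
  | succ m ih =>
    have : x + n * (m + 1) = (x + n * m) + n := by ring
    rw [this, Phi_window h n μ hper hnz, ih, pow_succ, mul_assoc]

lemma core_lt (h : ℝ) (hh : 0 < h) (n : ℕ) (hn : 1 ≤ n) (μ : ℕ → ℝ)
    (hper : ∀ k, μ (k + n) = μ k) (hnz : ∀ k, 1 + h * μ k ≠ 0)
    (hlt : |∏ i ∈ Finset.range n, (1 + h * μ i)| < 1)
    (δ : ℝ) (hδ : 0 ≤ δ) (w : ℕ → ℝ) (hw : ∀ k, |w k| ≤ δ) :
    ∃ e : ℕ → ℝ, (∀ k, e (k + 1) = (1 + h * μ k) * e k + h * w k) ∧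
      ∀ k, |e k| ≤ h * |∏ i ∈ Finset.range n, (1 + h * μ i)| *
        (1 - |∏ i ∈ Finset.range n, (1 + h * μ i)|)⁻¹ *
        (∑ j ∈ Finset.range n, ∏ i ∈ Finset.range (j + 1), 1 / |1 + h * μ (k + i)|) * δ := by
  set E := ∏ i ∈ Finset.range n, (1 + h * μ i) with hEdef
  refine ⟨fun k => h * ∑ j ∈ Finset.range k, w j * (Phi h μ k / Phi h μ (j + 1)), ?_, ?_⟩
  · intro k
    dsimp only
    have key : ∀ j, w j * (Phi h μ (k + 1) / Phi h μ (j + 1))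
        = (1 + h * μ k) * (w j * (Phi h μ k / Phi h μ (j + 1))) := fun j => by
      rw [Phi_succ]; ring
    conv_lhs => rw [Finset.sum_range_succ]
    rw [div_self (Phi_ne_zero h μ hnz (k + 1))]
    rw [Finset.sum_congr rfl (fun j _ => key j), ← Finset.mul_sum]
    ring
  · intro k
    have hSnn : 0 ≤ ∑ j ∈ Finset.range n, ∏ i ∈ Finset.range (j + 1), 1 / |1 + h * μ (k + i)| :=
      Finset.sum_nonneg fun j _ => Finset.prod_nonneg fun i _ => by positivity
    have habs : |h * ∑ j ∈ Finset.range k, w j * (Phi h μ k / Phi h μ (j + 1))|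
        ≤ h * ∑ j ∈ Finset.range k, δ * |Phi h μ k / Phi h μ (j + 1)| := by
      rw [abs_mul, abs_of_pos hh]
      refine mul_le_mul_of_nonneg_left ?_ hh.le
      refine (Finset.abs_sum_le_sum_abs _ _).trans ?_
      refine Finset.sum_le_sum fun j _ => ?_
      rw [abs_mul]
      exact mul_le_mul_of_nonneg_right (hw j) (abs_nonneg _)
    have hratio : ∀ d, d < k → |Phi h μ k / Phi h μ (k - d)|
        = |E| ^ (d / n) * (|E| * ∏ i ∈ Finset.range (n - d % n), 1 / |1 + h * μ (k + i)|) := by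
      intro d hd
      have htn : d % n < n := Nat.mod_lt _ (by omega)
      have htd : d % n ≤ d := Nat.mod_le _ _
      have hdm : n * (d / n) + d % n = d := Nat.div_add_mod d n
      have hA : Phi h μ (k - d % n) = Phi h μ (k - d) * E ^ (d / n) := by
        rw [show k - d % n = (k - d) + n * (d / n) from by omega,
          Phi_mul_pow h n μ hper hnz]
      have hB : Phi h μ (k - d % n) * E
          = Phi h μ k * ∏ i ∈ Finset.range (n - d % n), (1 + h * μ (k + i)) := by
        have h2 := Phi_window h n μ hper hnz (k - d % n)
        rw [show (k - d % n) + n = k + (n - d % n) from by omega, Phi_add] at h2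
        rw [← h2]
      have hPne : (∏ i ∈ Finset.range (n - d % n), (1 + h * μ (k + i))) ≠ 0 :=
        Finset.prod_ne_zero_iff.mpr fun i _ => hnz _
      have hPabs : ∏ i ∈ Finset.range (n - d % n), 1 / |1 + h * μ (k + i)|
          = |∏ i ∈ Finset.range (n - d % n), (1 + h * μ (k + i))|⁻¹ := by
        rw [Finset.abs_prod, ← Finset.prod_inv_distrib]
        simp [one_div]
      have h6 : |Phi h μ k| * |∏ i ∈ Finset.range (n - d % n), (1 + h * μ (k + i))|
          = |Phi h μ (k - d)| * (|E| ^ (d / n) * |E|) := by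
        rw [← abs_mul, ← hB, hA, abs_mul, abs_mul, abs_pow]
        ring
      rw [abs_div, hPabs]
      rw [div_eq_iff (abs_ne_zero.mpr (Phi_ne_zero h μ hnz _))]
      have hPabs0 : |∏ i ∈ Finset.range (n - d % n), (1 + h * μ (k + i))| ≠ 0 :=
        abs_ne_zero.mpr hPne
      field_simp
      linear_combination h6
    have hsum : ∑ j ∈ Finset.range k, |Phi h μ k / Phi h μ (j + 1)|
        ≤ (1 - |E|)⁻¹ * ∑ t ∈ Finset.range n,
            (|E| * ∏ i ∈ Finset.range (n - t), 1 / |1 + h * μ (k + i)|) := by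
      rw [← Finset.sum_range_reflect]
      have hcongr : ∀ j ∈ Finset.range k, |Phi h μ k / Phi h μ (k - 1 - j + 1)|
          = |E| ^ (j / n) * (|E| * ∏ i ∈ Finset.range (n - j % n), 1 / |1 + h * μ (k + i)|) := by
        intro j hj
        have hj' := Finset.mem_range.mp hj
        rw [show k - 1 - j + 1 = k - j from by omega]
        exact hratio j hj'
      rw [Finset.sum_congr rfl hcongr]
      exact sum_div_mod_bound n hn |E| (abs_nonneg E) hlt
        (fun t => |E| * ∏ i ∈ Finset.range (n - t), 1 / |1 + h * μ (k + i)|)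
        (fun t => by positivity) k
    have hreform : ∑ t ∈ Finset.range n,
          (|E| * ∏ i ∈ Finset.range (n - t), 1 / |1 + h * μ (k + i)|)
        = |E| * ∑ j ∈ Finset.range n, ∏ i ∈ Finset.range (j + 1), 1 / |1 + h * μ (k + i)| := by
      rw [Finset.mul_sum]
      rw [← Finset.sum_range_reflect
        (fun t => |E| * ∏ i ∈ Finset.range (t + 1), 1 / |1 + h * μ (k + i)|) n]
      refine Finset.sum_congr rfl fun t ht => ?_
      have htn := Finset.mem_range.mp ht
      rw [show n - 1 - t + 1 = n - t from by omega]
    refine habs.trans ?_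
    have hpull : ∑ j ∈ Finset.range k, δ * |Phi h μ k / Phi h μ (j + 1)|
        = δ * ∑ j ∈ Finset.range k, |Phi h μ k / Phi h μ (j + 1)| := by
      rw [Finset.mul_sum]
    rw [hpull]
    have hEnn : (0:ℝ) ≤ (1 - |E|)⁻¹ := by
      have : (0:ℝ) < 1 - |E| := by linarith
      positivity
    calc h * (δ * ∑ j ∈ Finset.range k, |Phi h μ k / Phi h μ (j + 1)|)
        ≤ h * (δ * ((1 - |E|)⁻¹ * (|E| * ∑ j ∈ Finset.range n,
            ∏ i ∈ Finset.range (j + 1), 1 / |1 + h * μ (k + i)|))) := by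
          refine mul_le_mul_of_nonneg_left ?_ hh.le
          refine mul_le_mul_of_nonneg_left ?_ hδ
          rw [← hreform]
          exact hsum
      _ = h * |E| * (1 - |E|)⁻¹ *
            (∑ j ∈ Finset.range n, ∏ i ∈ Finset.range (j + 1), 1 / |1 + h * μ (k + i)|) * δ := by
          ring

lemma core_gt (h : ℝ) (hh : 0 < h) (n : ℕ) (hn : 1 ≤ n) (μ : ℕ → ℝ)
    (hper : ∀ k, μ (k + n) = μ k) (hnz : ∀ k, 1 + h * μ k ≠ 0)
    (hgt : 1 < |∏ i ∈ Finset.range n, (1 + h * μ i)|)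
    (δ : ℝ) (hδ : 0 ≤ δ) (w : ℕ → ℝ) (hw : ∀ k, |w k| ≤ δ) :
    ∃ e : ℕ → ℝ, (∀ k, e (k + 1) = (1 + h * μ k) * e k + h * w k) ∧
      ∀ k, |e k| ≤ h * |∏ i ∈ Finset.range n, (1 + h * μ i)| *
        (|∏ i ∈ Finset.range n, (1 + h * μ i)| - 1)⁻¹ *
        (∑ j ∈ Finset.range n, ∏ i ∈ Finset.range (j + 1), 1 / |1 + h * μ (k + i)|) * δ := by
  set E := ∏ i ∈ Finset.range n, (1 + h * μ i) with hEdef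
  have hE0 : E ≠ 0 := Finset.prod_ne_zero_iff.mpr fun i _ => hnz i
  have hEa : (0:ℝ) < |E| := abs_pos.mpr hE0
  set ρ : ℝ := |E|⁻¹ with hρdef
  have hρ0 : 0 ≤ ρ := by positivity
  have hρ1 : ρ < 1 := by
    rw [hρdef]
    exact inv_lt_one_of_one_lt₀ hgt
  -- claim 1 : ratio formula
  have claim1 : ∀ k j, |Phi h μ k / Phi h μ (k + j + 1)|
      = ρ ^ (j / n) * ∏ i ∈ Finset.range (j % n + 1), 1 / |1 + h * μ (k + i)| := by
    intro k j
    have hdm : n * (j / n) + j % n = j := Nat.div_add_mod j n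
    have hsplit : Phi h μ (k + j + 1)
        = Phi h μ k * (∏ i ∈ Finset.range (j % n + 1), (1 + h * μ (k + i))) * E ^ (j / n) := by
      rw [show k + j + 1 = (k + (j % n + 1)) + n * (j / n) from by omega,
        Phi_mul_pow h n μ hper hnz, Phi_add]
    have hQne : (∏ i ∈ Finset.range (j % n + 1), (1 + h * μ (k + i))) ≠ 0 :=
      Finset.prod_ne_zero_iff.mpr fun i _ => hnz _
    have hQabs : ∏ i ∈ Finset.range (j % n + 1), 1 / |1 + h * μ (k + i)|
        = |∏ i ∈ Finset.range (j % n + 1), (1 + h * μ (k + i))|⁻¹ := by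
      rw [Finset.abs_prod, ← Finset.prod_inv_distrib]
      simp [one_div]
    rw [hsplit, hQabs, abs_div, abs_mul, abs_mul, abs_pow, hρdef]
    have hphine : |Phi h μ k| ≠ 0 := abs_ne_zero.mpr (Phi_ne_zero h μ hnz _)
    have hQabsne : |∏ i ∈ Finset.range (j % n + 1), (1 + h * μ (k + i))| ≠ 0 :=
      abs_ne_zero.mpr hQne
    field_simp
    rw [← mul_pow, mul_one_div_cancel hEa.ne', one_pow]
  -- claim 2 : partial sums bounded
  have claim2 : ∀ k N, ∑ j ∈ Finset.range N,
        (ρ ^ (j / n) * ∏ i ∈ Finset.range (j % n + 1), 1 / |1 + h * μ (k + i)|)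
      ≤ (1 - ρ)⁻¹ * ∑ j ∈ Finset.range n, ∏ i ∈ Finset.range (j + 1), 1 / |1 + h * μ (k + i)| :=
    fun k N => sum_div_mod_bound n hn ρ hρ0 hρ1
      (fun t => ∏ i ∈ Finset.range (t + 1), 1 / |1 + h * μ (k + i)|)
      (fun t => Finset.prod_nonneg fun i _ => by positivity) N
  have hgnn : ∀ k j, 0 ≤ ρ ^ (j / n) * ∏ i ∈ Finset.range (j % n + 1), 1 / |1 + h * μ (k + i)| :=
    fun k j => mul_nonneg (pow_nonneg hρ0 _) (Finset.prod_nonneg fun i _ => by positivity)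
  have hgsum : ∀ k, Summable (fun j =>
      ρ ^ (j / n) * ∏ i ∈ Finset.range (j % n + 1), 1 / |1 + h * μ (k + i)|) :=
    fun k => summable_of_sum_range_le (hgnn k) (claim2 k)
  have hTabs : ∀ k j, |w (k + j) * (Phi h μ k / Phi h μ (k + j + 1))|
      ≤ δ * (ρ ^ (j / n) * ∏ i ∈ Finset.range (j % n + 1), 1 / |1 + h * μ (k + i)|) := by
    intro k j
    rw [abs_mul, claim1 k j]
    exact mul_le_mul_of_nonneg_right (hw _) (hgnn k j)
  have hTabsSummable : ∀ k, Summable (fun j => |w (k + j) * (Phi h μ k / Phi h μ (k + j + 1))|) :=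
    fun k => Summable.of_nonneg_of_le (fun j => abs_nonneg _) (hTabs k) ((hgsum k).mul_left δ)
  have hT : ∀ k, Summable (fun j => w (k + j) * (Phi h μ k / Phi h μ (k + j + 1))) :=
    fun k => (hTabsSummable k).of_abs
  refine ⟨fun k => -(h * ∑' j, w (k + j) * (Phi h μ k / Phi h μ (k + j + 1))), ?_, ?_⟩
  · intro k
    dsimp only
    have hfe : ∀ j, (1 + h * μ k) * (w (k + j) * (Phi h μ k / Phi h μ (k + j + 1)))
        = w (k + j) * (Phi h μ (k + 1) / Phi h μ (k + j + 1)) := fun j => by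
      rw [Phi_succ h μ k]; ring
    have hFsummable : Summable (fun j => w (k + j) * (Phi h μ (k + 1) / Phi h μ (k + j + 1))) := by
      refine Summable.congr ((hT k).mul_left (1 + h * μ k)) hfe
    have hzero_add : ∑' j, w (k + j) * (Phi h μ (k + 1) / Phi h μ (k + j + 1))
        = w k * (Phi h μ (k + 1) / Phi h μ (k + 0 + 1))
          + ∑' j, w (k + (j+1)) * (Phi h μ (k + 1) / Phi h μ (k + (j+1) + 1)) := by
      rw [Summable.tsum_eq_zero_add hFsummable]
      simp
    have hshift : ∑' j, w (k + (j+1)) * (Phi h μ (k + 1) / Phi h μ (k + (j+1) + 1))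
        = ∑' j, w ((k+1) + j) * (Phi h μ (k + 1) / Phi h μ ((k+1) + j + 1)) := by
      refine tsum_congr fun j => ?_
      rw [show k + (j+1) = (k+1) + j from by omega]
    have hf0 : w k * (Phi h μ (k + 1) / Phi h μ (k + 0 + 1)) = w k := by
      rw [show k + 0 + 1 = k + 1 from by omega, div_self (Phi_ne_zero h μ hnz _), mul_one]
    have hmul : (1 + h * μ k) * ∑' j, w (k + j) * (Phi h μ k / Phi h μ (k + j + 1))
        = ∑' j, w (k + j) * (Phi h μ (k + 1) / Phi h μ (k + j + 1)) := by
      rw [← tsum_mul_left]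
      exact tsum_congr hfe
    have : (1 + h * μ k) * -(h * ∑' j, w (k + j) * (Phi h μ k / Phi h μ (k + j + 1))) + h * w k
        = -(h * ∑' j, w ((k+1) + j) * (Phi h μ (k + 1) / Phi h μ ((k+1) + j + 1))) := by
      rw [show (1 + h * μ k) * -(h * ∑' j, w (k + j) * (Phi h μ k / Phi h μ (k + j + 1)))
          = -(h * ((1 + h * μ k) * ∑' j, w (k + j) * (Phi h μ k / Phi h μ (k + j + 1)))) from by ring,
        hmul, hzero_add, hshift, hf0]
      ring
    rw [this]
  · intro k
    dsimp only
    have hSnn : 0 ≤ ∑ j ∈ Finset.range n, ∏ i ∈ Finset.range (j + 1), 1 / |1 + h * μ (k + i)| :=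
      Finset.sum_nonneg fun j _ => Finset.prod_nonneg fun i _ => by positivity
    have htsumabs : |∑' j, w (k + j) * (Phi h μ k / Phi h μ (k + j + 1))|
        ≤ ∑' j, |w (k + j) * (Phi h μ k / Phi h μ (k + j + 1))| := by
      have hs : Summable (fun j => ‖w (k + j) * (Phi h μ k / Phi h μ (k + j + 1))‖) := by
        simp only [Real.norm_eq_abs]
        exact hTabsSummable k
      have := norm_tsum_le_tsum_norm (f := fun j => w (k + j) * (Phi h μ k / Phi h μ (k + j + 1))) hs
      simp only [Real.norm_eq_abs] at this
      exact this
    have h2 : ∑' j, |w (k + j) * (Phi h μ k / Phi h μ (k + j + 1))|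
        ≤ ∑' j, δ * (ρ ^ (j / n) * ∏ i ∈ Finset.range (j % n + 1), 1 / |1 + h * μ (k + i)|) :=
      Summable.tsum_le_tsum (hTabs k) (hTabsSummable k) ((hgsum k).mul_left δ)
    have h3 : ∑' j, δ * (ρ ^ (j / n) * ∏ i ∈ Finset.range (j % n + 1), 1 / |1 + h * μ (k + i)|)
        = δ * ∑' j, (ρ ^ (j / n) * ∏ i ∈ Finset.range (j % n + 1), 1 / |1 + h * μ (k + i)|) :=
      tsum_mul_left
    have h4 : ∑' j, (ρ ^ (j / n) * ∏ i ∈ Finset.range (j % n + 1), 1 / |1 + h * μ (k + i)|)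
        ≤ (1 - ρ)⁻¹ * ∑ j ∈ Finset.range n, ∏ i ∈ Finset.range (j + 1), 1 / |1 + h * μ (k + i)| :=
      Real.tsum_le_of_sum_range_le (hgnn k) (claim2 k)
    have hρinv : (1 - ρ)⁻¹ = |E| * (|E| - 1)⁻¹ := by
      rw [hρdef]
      have h1' : |E| - 1 ≠ 0 := by intro hcon; nlinarith
      field_simp
    rw [abs_neg, abs_mul, abs_of_pos hh]
    calc h * |∑' j, w (k + j) * (Phi h μ k / Phi h μ (k + j + 1))|
        ≤ h * (δ * ((1 - ρ)⁻¹ * ∑ j ∈ Finset.range n,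
            ∏ i ∈ Finset.range (j + 1), 1 / |1 + h * μ (k + i)|)) := by
          refine mul_le_mul_of_nonneg_left ?_ hh.le
          refine (htsumabs.trans (h2.trans_eq h3)).trans ?_
          exact mul_le_mul_of_nonneg_left h4 hδ
      _ = h * |E| * (|E| - 1)⁻¹ *
            (∑ j ∈ Finset.range n, ∏ i ∈ Finset.range (j + 1), 1 / |1 + h * μ (k + i)|) * δ := by
          rw [hρinv]; ring

lemma core (h : ℝ) (hh : 0 < h) (n : ℕ) (hn : 1 ≤ n) (μ : ℕ → ℝ)
    (hper : ∀ k, μ (k + n) = μ k) (hnz : ∀ k, 1 + h * μ k ≠ 0)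
    (hE1 : |∏ i ∈ Finset.range n, (1 + h * μ i)| ≠ 1)
    (δ : ℝ) (hδ : 0 ≤ δ) (w : ℕ → ℝ) (hw : ∀ k, |w k| ≤ δ) :
    ∃ e : ℕ → ℝ, (∀ k, hDiff h e k = μ k * e k + w k) ∧
      ∀ k, |e k| ≤ (h * |∏ i ∈ Finset.range n, (1 + h * μ i)| /
          abs (1 - |∏ i ∈ Finset.range n, (1 + h * μ i)|)) *
        (∑ j ∈ Finset.range n, ∏ i ∈ Finset.range (j + 1), 1 / |1 + h * μ (k + i)|) * δ := by
  set E := ∏ i ∈ Finset.range n, (1 + h * μ i) with hEdef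
  have hE0 : E ≠ 0 := Finset.prod_ne_zero_iff.mpr fun i _ => hnz i
  have hEa : (0:ℝ) < |E| := abs_pos.mpr hE0
  have hrec : ∀ e : ℕ → ℝ, (∀ k, e (k + 1) = (1 + h * μ k) * e k + h * w k) →
      ∀ k, hDiff h e k = μ k * e k + w k := by
    intro e he k
    simp only [hDiff, he k]
    field_simp
    ring
  rcases lt_or_gt_of_ne hE1 with hlt | hgt
  · obtain ⟨e, he1, he2⟩ := core_lt h hh n hn μ hper hnz hlt δ hδ w hw
    refine ⟨e, hrec e he1, fun k => (he2 k).trans_eq ?_⟩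
    rw [show abs (1 - |E|) = 1 - |E| from abs_of_pos (by linarith), div_eq_mul_inv]
  · obtain ⟨e, he1, he2⟩ := core_gt h hh n hn μ hper hnz hgt δ hδ w hw
    refine ⟨e, hrec e he1, fun k => (he2 k).trans_eq ?_⟩
    rw [show abs (1 - |E|) = |E| - 1 from by rw [abs_sub_comm]; exact abs_of_pos (by linarith),
      div_eq_mul_inv]

lemma factor_identity (h : ℝ) (hh : h ≠ 0) (L y : ℕ → ℝ) (k : ℕ) :
    hDiff h (hDiff h (hDiff h y)) k
      + L (k+2) * hDiff h (hDiff h y) k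
      + (2 * hDiff h L (k+1) + hDiff h L (k+2) - L (k+2) * L (k+3)) * hDiff h y k
      + (hDiff h (hDiff h L) k + L k * hDiff h L (k+2) - L k * L (k+2) * L (k+3)) * y k
    = hDiff h (fun m => hDiff h (fun j => hDiff h y j + L j * y j) m
        + L (m+2) * (hDiff h y m + L m * y m)) k
      - L (k+3) * (hDiff h (fun j => hDiff h y j + L j * y j) k
        + L (k+2) * (hDiff h y k + L k * y k)) := by
  simp only [hDiff]
  field_simp
  ring


theorem stmt_5 (h : ℝ) (hh : 0 < h) (n : ℕ) (hn : 1 ≤ n) (c : ℕ → ℝ)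
    (hc : ∀ j, j < n → c j ≠ 1 / h ∧ c j ≠ -1 / h)
    (he0 : 0 < |eExp h n c|) (he1 : |eExp h n c| ≠ 1)
    (hne0 : 0 < |eExp h n (fun j => -c j)|) (hne1 : |eExp h n (fun j => -c j)| ≠ 1)
    (p q r : ℕ → ℝ)
    (hp : ∀ k, p k = cyc n c (k + 2))
    (hq : ∀ k, q k = 2 * hDiff h (cyc n c) (k + 1) + hDiff h (cyc n c) (k + 2)
      - cyc n c (k + 2) * cyc n c (k + 3))
    (hr : ∀ k, r k = hDiff h (hDiff h (cyc n c)) k + cyc n c k * hDiff h (cyc n c) (k + 2)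
      - cyc n c k * cyc n c (k + 2) * cyc n c (k + 3)) :
    ∀ ε : ℝ, 0 < ε → ∀ ξ : ℕ → ℝ,
      (∀ k, |hDiff h (hDiff h (hDiff h ξ)) k + p k * hDiff h (hDiff h ξ) k
        + q k * hDiff h ξ k + r k * ξ k| ≤ ε) →
      ∃ y : ℕ → ℝ,
        (∀ k, hDiff h (hDiff h (hDiff h y)) k + p k * hDiff h (hDiff h y) k
          + q k * hDiff h y k + r k * y k = 0) ∧
        ∀ k, |ξ k - y k| ≤ K0 h n c * (K0 h n (fun j => -c j)) ^ 2 * ε := by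

  intro ε hε ξ hξ
  have hh' : h ≠ 0 := ne_of_gt hh
  have hn0 : 0 < n := hn
  -- nonvanishing of factors
  have hplus : ∀ m : ℕ, 1 + h * cyc n c m ≠ 0 := by
    intro m hcon
    refine (hc (m % n) (Nat.mod_lt _ hn0)).2 ?_
    rw [eq_div_iff hh']
    have : cyc n c m = c (m % n) := rfl
    rw [this] at hcon
    linarith
  have hminus : ∀ m : ℕ, 1 + h * (-(cyc n c m)) ≠ 0 := by
    intro m hcon
    refine (hc (m % n) (Nat.mod_lt _ hn0)).1 ?_
    rw [eq_div_iff hh']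
    have : cyc n c m = c (m % n) := rfl
    rw [this] at hcon
    linarith
  -- periodicity
  have hcycper : ∀ s k : ℕ, cyc n c (k + n + s) = cyc n c (k + s) := by
    intro s k
    show c ((k + n + s) % n) = c ((k + s) % n)
    rw [show k + n + s = (k + s) + n from by omega, Nat.add_mod_right]
  -- the three coefficient sequences
  have hnz1 : ∀ k, 1 + h * (fun k => cyc n c (k + 3)) k ≠ 0 := fun k => hplus (k + 3)
  have hnz2 : ∀ k, 1 + h * (fun k => -(cyc n c (k + 2))) k ≠ 0 := fun k => hminus (k + 2)
  have hnz3 : ∀ k, 1 + h * (fun k => -(cyc n c k)) k ≠ 0 := fun k => hminus k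
  have hper1 : ∀ k, (fun k => cyc n c (k + 3)) (k + n) = (fun k => cyc n c (k + 3)) k :=
    fun k => hcycper 3 k
  have hper2 : ∀ k, (fun k => -(cyc n c (k + 2))) (k + n) = (fun k => -(cyc n c (k + 2))) k :=
    fun k => by simp only [neg_inj]; exact hcycper 2 k
  have hper3 : ∀ k, (fun k => -(cyc n c k)) (k + n) = (fun k => -(cyc n c k)) k :=
    fun k => by simp only [neg_inj]; exact hcycper 0 k
  -- E identifications
  have hmodid : ∀ (g : ℕ → ℝ), ∏ i ∈ Finset.range n, g (i % n) = ∏ i ∈ Finset.range n, g i :=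
    fun g => Finset.prod_congr rfl fun i hi => by
      rw [Nat.mod_eq_of_lt (Finset.mem_range.mp hi)]
  have hE1eq : ∏ i ∈ Finset.range n, (1 + h * (fun k => cyc n c (k + 3)) i) = eExp h n c := by
    calc ∏ i ∈ Finset.range n, (1 + h * (fun k => cyc n c (k + 3)) i)
        = ∏ i ∈ Finset.range n, (fun m => 1 + h * c m) ((i + 3) % n) := rfl
      _ = ∏ i ∈ Finset.range n, (fun m => 1 + h * c m) (i % n) :=
          prod_mod_shift n hn (fun m => 1 + h * c m) 3
      _ = eExp h n c := hmodid (fun m => 1 + h * c m)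
  have hE2eq : ∏ i ∈ Finset.range n, (1 + h * (fun k => -(cyc n c (k + 2))) i)
      = eExp h n (fun j => -c j) := by
    calc ∏ i ∈ Finset.range n, (1 + h * (fun k => -(cyc n c (k + 2))) i)
        = ∏ i ∈ Finset.range n, (fun m => 1 + h * -(c m)) ((i + 2) % n) := rfl
      _ = ∏ i ∈ Finset.range n, (fun m => 1 + h * -(c m)) (i % n) :=
          prod_mod_shift n hn (fun m => 1 + h * -(c m)) 2
      _ = eExp h n (fun j => -c j) := hmodid (fun m => 1 + h * -(c m))
  have hE3eq : ∏ i ∈ Finset.range n, (1 + h * (fun k => -(cyc n c k)) i)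
      = eExp h n (fun j => -c j) := by
    calc ∏ i ∈ Finset.range n, (1 + h * (fun k => -(cyc n c k)) i)
        = ∏ i ∈ Finset.range n, (fun m => 1 + h * -(c m)) (i % n) := rfl
      _ = eExp h n (fun j => -c j) := hmodid (fun m => 1 + h * -(c m))
  -- S identifications
  have hS1 : ∀ k, (∑ j ∈ Finset.range n, ∏ i ∈ Finset.range (j + 1),
        1 / |1 + h * (fun k => cyc n c (k + 3)) (k + i)|) = Ssum h n c ((k + 3) % n) := by
    intro k
    rw [Ssum]
    refine Finset.sum_congr rfl fun j _ => Finset.prod_congr rfl fun i _ => ?_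
    show 1 / |1 + h * c ((k + i + 3) % n)| = 1 / |1 + h * c (((k + 3) % n + i) % n)|
    rw [Nat.mod_add_mod, show k + 3 + i = k + i + 3 from by omega]
  have hS2 : ∀ k, (∑ j ∈ Finset.range n, ∏ i ∈ Finset.range (j + 1),
        1 / |1 + h * (fun k => -(cyc n c (k + 2))) (k + i)|)
      = Ssum h n (fun j => -c j) ((k + 2) % n) := by
    intro k
    rw [Ssum]
    refine Finset.sum_congr rfl fun j _ => Finset.prod_congr rfl fun i _ => ?_
    show 1 / |1 + h * -(c ((k + i + 2) % n))| = 1 / |1 + h * -(c (((k + 2) % n + i) % n))|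
    rw [Nat.mod_add_mod, show k + 2 + i = k + i + 2 from by omega]
  have hS3 : ∀ k, (∑ j ∈ Finset.range n, ∏ i ∈ Finset.range (j + 1),
        1 / |1 + h * (fun k => -(cyc n c k)) (k + i)|)
      = Ssum h n (fun j => -c j) (k % n) := by
    intro k
    rw [Ssum]
    refine Finset.sum_congr rfl fun j _ => Finset.prod_congr rfl fun i _ => ?_
    show 1 / |1 + h * -(c ((k + i) % n))| = 1 / |1 + h * -(c ((k % n + i) % n))|
    rw [Nat.mod_add_mod]
  -- Ssum facts
  have hSnn : ∀ (c' : ℕ → ℝ) (m : ℕ), 0 ≤ Ssum h n c' m := fun c' m =>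
    Finset.sum_nonneg fun j _ => Finset.prod_nonneg fun i _ => by positivity
  have hSsup : ∀ (c' : ℕ → ℝ) (m : ℕ), Ssum h n c' (m % n) ≤ ⨆ k : Fin n, Ssum h n c' (k : ℕ) := by
    intro c' m
    exact le_ciSup (f := fun k : Fin n => Ssum h n c' (k : ℕ))
      (Set.Finite.bddAbove (Set.finite_range _)) (⟨m % n, Nat.mod_lt _ hn0⟩ : Fin n)
  have hsupnn : ∀ (c' : ℕ → ℝ), 0 ≤ ⨆ k : Fin n, Ssum h n c' (k : ℕ) := fun c' =>
    le_trans (hSnn c' (0 % n)) (hSsup c' 0)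
  have hcoefnn : ∀ x : ℝ, (0:ℝ) ≤ h * |x| / abs (1 - |x|) := fun x => by positivity
  have hK0nn1 : 0 ≤ K0 h n c := mul_nonneg (hcoefnn _) (hsupnn c)
  have hK0nn2 : 0 ≤ K0 h n (fun j => -c j) := mul_nonneg (hcoefnn _) (hsupnn _)
  -- defect sequences
  obtain ⟨v, hvdef⟩ : ∃ v : ℕ → ℝ, v = fun k => hDiff h ξ k + cyc n c k * ξ k := ⟨_, rfl⟩
  obtain ⟨u, hudef⟩ : ∃ u : ℕ → ℝ, u = fun k => hDiff h v k + cyc n c (k + 2) * v k := ⟨_, rfl⟩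
  obtain ⟨w, hwdef⟩ : ∃ w : ℕ → ℝ, w = fun k => hDiff h u k - cyc n c (k + 3) * u k := ⟨_, rfl⟩
  have hDiff_congr : ∀ f g : ℕ → ℝ, (∀ m, f m = g m) → ∀ m, hDiff h f m = hDiff h g m := by
    intro f g hfg m
    simp only [hDiff, hfg]
  have hwbound : ∀ k, |w k| ≤ ε := by
    intro k
    have h1 : hDiff h (hDiff h (hDiff h ξ)) k + p k * hDiff h (hDiff h ξ) k
        + q k * hDiff h ξ k + r k * ξ k = w k := by
      rw [hp, hq, hr, factor_identity h hh' (cyc n c) ξ k, hwdef, hudef, hvdef]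
    rw [← h1]
    exact hξ k
  -- step 1
  obtain ⟨e₁, he₁, hb₁⟩ := core h hh n hn (fun k => cyc n c (k + 3)) hper1 hnz1
    (by rw [hE1eq]; exact he1) ε hε.le w hwbound
  have hb₁' : ∀ k, |e₁ k| ≤ K0 h n c * ε := by
    intro k
    refine (hb₁ k).trans ?_
    rw [hE1eq, hS1 k, K0]
    refine mul_le_mul_of_nonneg_right (mul_le_mul_of_nonneg_left (hSsup c (k + 3)) ?_) hε.le
    positivity
  -- step 2
  obtain ⟨e₂, he₂, hb₂⟩ := core h hh n hn (fun k => -(cyc n c (k + 2))) hper2 hnz2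
    (by rw [hE2eq]; exact hne1) (K0 h n c * ε) (mul_nonneg hK0nn1 hε.le) e₁ hb₁'
  have hb₂' : ∀ k, |e₂ k| ≤ K0 h n (fun j => -c j) * (K0 h n c * ε) := by
    intro k
    refine (hb₂ k).trans ?_
    rw [hE2eq, hS2 k, K0]
    refine mul_le_mul_of_nonneg_right
      (mul_le_mul_of_nonneg_left (hSsup (fun j => -c j) (k + 2)) ?_)
      (mul_nonneg hK0nn1 hε.le)
    positivity
  -- step 3
  obtain ⟨e₃, he₃, hb₃⟩ := core h hh n hn (fun k => -(cyc n c k)) hper3 hnz3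
    (by rw [hE3eq]; exact hne1) (K0 h n (fun j => -c j) * (K0 h n c * ε))
    (mul_nonneg hK0nn2 (mul_nonneg hK0nn1 hε.le)) e₂ hb₂'
  have hb₃' : ∀ k, |e₃ k| ≤ K0 h n (fun j => -c j) *
      (K0 h n (fun j => -c j) * (K0 h n c * ε)) := by
    intro k
    refine (hb₃ k).trans ?_
    rw [hE3eq, hS3 k, K0]
    refine mul_le_mul_of_nonneg_right
      (mul_le_mul_of_nonneg_left (hSsup (fun j => -c j) k) ?_)
      (mul_nonneg hK0nn2 (mul_nonneg hK0nn1 hε.le))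
    positivity
  -- the exact solution
  refine ⟨fun k => ξ k - e₃ k, ?_, ?_⟩
  · intro k
    rw [hp, hq, hr, factor_identity h hh' (cyc n c) (fun k => ξ k - e₃ k) k]
    have hV : ∀ m, hDiff h (fun k => ξ k - e₃ k) m + cyc n c m * (ξ m - e₃ m)
        = v m - e₂ m := by
      intro m
      have hd : hDiff h (fun k => ξ k - e₃ k) m = hDiff h ξ m - hDiff h e₃ m := by
        simp only [hDiff]; ring
      have he3m := he₃ m
      rw [hd, hvdef]
      simp only []
      linarith [he3m]
    have hA : ∀ m, hDiff h (fun j => hDiff h (fun k => ξ k - e₃ k) j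
          + cyc n c j * ((fun k => ξ k - e₃ k) j)) m
        + cyc n c (m + 2) * (hDiff h (fun k => ξ k - e₃ k) m
          + cyc n c m * ((fun k => ξ k - e₃ k) m))
        = u m - e₁ m := by
      intro m
      have hd1 : hDiff h (fun j => hDiff h (fun k => ξ k - e₃ k) j
            + cyc n c j * ((fun k => ξ k - e₃ k) j)) m
          = hDiff h (fun j => v j - e₂ j) m := by
        refine hDiff_congr _ _ (fun j => ?_) m
        exact hV j
      have hd2 : hDiff h (fun j => v j - e₂ j) m = hDiff h v m - hDiff h e₂ m := by
        simp only [hDiff]; ring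
      have he2m := he₂ m
      rw [hd1, hd2, hudef]
      have := hV m
      simp only [] at this ⊢
      rw [this]
      linarith [he2m]
    have hd3 : hDiff h (fun m => hDiff h (fun j => hDiff h (fun k => ξ k - e₃ k) j
          + cyc n c j * ((fun k => ξ k - e₃ k) j)) m
        + cyc n c (m + 2) * (hDiff h (fun k => ξ k - e₃ k) m
          + cyc n c m * ((fun k => ξ k - e₃ k) m))) k
        = hDiff h (fun m => u m - e₁ m) k := hDiff_congr _ _ hA k
    have hd4 : hDiff h (fun m => u m - e₁ m) k = hDiff h u k - hDiff h e₁ k := by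
      simp only [hDiff]; ring
    have he1k := he₁ k
    have hwk : w k = hDiff h u k - cyc n c (k + 3) * u k := by rw [hwdef]
    rw [hd3, hd4, hA k]
    rw [he1k, hwk]
    ring
  · intro k
    have : |ξ k - (ξ k - e₃ k)| = |e₃ k| := by
      congr 1
      ring
    rw [this]
    refine (hb₃' k).trans_eq ?_
    ring
end

section
/- Assume h > 0, n ≥ 1, and λ_0, …, λ_{n−1} are real numbers with λ_j ≠ 1/h and λ_j ≠ −1/h for all j, such that 0 < |e_λ(nh)| ≠ 1 and 0 < |e_{−λ}(nh)| ≠ 1. Define p(k) := −λ(k+2), q(k) := −2·Δ_h λ(k+1) + Δ_h λ(k+2) − λ(k+2)λ(k+3), and r(k) := −Δ²_h λ(k) − λ(k)·Δ_h λ(k+2) + λ(k)λ(k+2)λ(k+3). Then the third-order equation Δ³_h y(k) + p(k)Δ²_h y(k) + q(k)Δ_h y(k) + r(k)y(k) = 0 is Hyers–Ulam stable on ℕ with Hyers–Ulam stability constant K = (K_0(λ))²·K_0(−λ): for every ε > 0 and every ξ : ℕ → ℝ satisfying |Δ³_h ξ(k) + p(k)Δ²_h ξ(k) + q(k)Δ_h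 ξ(k) + r(k)ξ(k)| ≤ ε for all k ∈ ℕ, there exists a solution y : ℕ → ℝ of the equation with |ξ(k) − y(k)| ≤ (K_0(λ))²·K_0(−λ)·ε for all k ∈ ℕ. -/
lemma prod_range_mod (f : ℕ → ℝ) (n : ℕ) (hn : 0 < n) (m : ℕ) :
    ∏ i ∈ Finset.range n, f ((m + i) % n) = ∏ i ∈ Finset.range n, f i := by
  induction m with
  | zero =>
    refine Finset.prod_congr rfl fun i hi => ?_
    rw [Nat.zero_add, Nat.mod_eq_of_lt (Finset.mem_range.1 hi)]
  | succ m ih =>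
    obtain ⟨n', rfl⟩ : ∃ n', n = n' + 1 := ⟨n - 1, by omega⟩
    calc ∏ i ∈ Finset.range (n' + 1), f ((m + 1 + i) % (n' + 1))
        = (∏ i ∈ Finset.range n', f ((m + 1 + i) % (n' + 1))) * f ((m + 1 + n') % (n' + 1)) :=
          Finset.prod_range_succ _ _
      _ = (∏ i ∈ Finset.range n', f ((m + (i + 1)) % (n' + 1))) * f ((m + 0) % (n' + 1)) := by
          congr 1
          · exact Finset.prod_congr rfl fun i _ => by rw [show m + 1 + i = m + (i + 1) by ring]
          · rw [show m + 1 + n' = m + 0 + (n' + 1) by ring, Nat.add_mod_right]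
      _ = ∏ i ∈ Finset.range (n' + 1), f ((m + i) % (n' + 1)) :=
          (Finset.prod_range_succ' (fun i => f ((m + i) % (n' + 1))) n').symm
      _ = ∏ i ∈ Finset.range (n' + 1), f i := ih

lemma geom_mod (n : ℕ) (hn : 0 < n) (x : ℝ) (hx0 : 0 ≤ x) (hx1 : x < 1)
    (B : ℕ → ℝ) (hB : ∀ s, 0 ≤ B s) :
    Summable (fun L : ℕ => x ^ (L / n) * B (L % n)) ∧
    ∑' L : ℕ, x ^ (L / n) * B (L % n) = (1 - x)⁻¹ * ∑ s ∈ Finset.range n, B s := by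
  haveI : NeZero n := ⟨by omega⟩
  have hg : Summable (fun q : ℕ => x ^ q) := summable_geometric_of_lt_one hx0 hx1
  have hfin : Summable (fun s : Fin n => B (s : ℕ)) := Summable.of_finite
  have hFs : Summable (fun p : ℕ × Fin n => x ^ p.1 * B (p.2 : ℕ)) :=
    Summable.mul_of_nonneg hg hfin (fun q => pow_nonneg hx0 _) (fun s => hB _)
  have key : (fun L : ℕ => x ^ (L / n) * B (L % n))
      = (fun p : ℕ × Fin n => x ^ p.1 * B (p.2 : ℕ)) ∘ (Nat.divModEquiv n) := by
    funext L
    simp [Nat.divModEquiv]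
  constructor
  · rw [key]; exact ((Nat.divModEquiv n).summable_iff).2 hFs
  · rw [key]
    rw [show ((fun p : ℕ × Fin n => x ^ p.1 * B (p.2 : ℕ)) ∘ (Nat.divModEquiv n))
        = fun a => (fun p : ℕ × Fin n => x ^ p.1 * B (p.2 : ℕ)) ((Nat.divModEquiv n) a) from rfl,
      (Nat.divModEquiv n).tsum_eq (fun p : ℕ × Fin n => x ^ p.1 * B (p.2 : ℕ))]
    rw [Summable.tsum_prod' hFs (fun b => Summable.of_finite)]
    have step : ∀ q : ℕ, ∑' s : Fin n, x ^ q * B (s : ℕ) = x ^ q * ∑ s ∈ Finset.range n, B s := by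
      intro q
      rw [tsum_fintype, Finset.mul_sum, ← Fin.sum_univ_eq_sum_range (fun s => x ^ q * B s) n]
    simp_rw [step]
    rw [tsum_mul_right, tsum_geometric_of_lt_one hx0 hx1]

lemma hu1 (h : ℝ) (hh : 0 < h) (n : ℕ) (hn : 1 ≤ n) (d : ℕ → ℝ)
    (hnz : ∀ j, j < n → 1 + h * d j ≠ 0)
    (he0 : 0 < |eExp h n d|) (he1 : |eExp h n d| ≠ 1)
    (s0 : ℕ) (ε : ℝ) (hε : 0 ≤ ε) (u : ℕ → ℝ)
    (hu : ∀ k, |hDiff h u k - d ((k + s0) % n) * u k| ≤ ε) :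
    ∃ v : ℕ → ℝ, (∀ k, hDiff h v k = d ((k + s0) % n) * v k) ∧
      ∀ k, |u k - v k| ≤ K0 h n d * ε := by
  have hn0 : 0 < n := hn
  set μ : ℕ → ℝ := fun t => d ((t + s0) % n) with hμdef
  set A : ℝ := |eExp h n d| with hAdef
  have hA0 : 0 < A := he0
  have hμnz : ∀ t, 1 + h * μ t ≠ 0 := fun t => hnz _ (Nat.mod_lt _ hn0)
  have hμper : ∀ t, μ (t + n) = μ t := by
    intro t; simp only [hμdef]
    rw [show t + n + s0 = t + s0 + n by ring, Nat.add_mod_right]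
  set P : ℕ → ℕ → ℝ := fun a L => ∏ i ∈ Finset.range L, |1 + h * μ (a + i)| with hPdef
  have hPpos : ∀ a L, 0 < P a L := fun a L =>
    Finset.prod_pos fun i _ => abs_pos.2 (hμnz _)
  have hPadd : ∀ a L M, P a (L + M) = P a L * P (a + L) M := by
    intro a L M
    simp only [hPdef]
    rw [Finset.prod_range_add]
    congr 1
    exact Finset.prod_congr rfl fun i _ => by rw [add_assoc]
  have hPn : ∀ a, P a n = A := by
    intro a
    have e1 : P a n = ∏ i ∈ Finset.range n, (fun j => |1 + h * d j|) ((a + s0 + i) % n) := by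
      refine Finset.prod_congr rfl fun i _ => ?_
      simp only [hμdef]
      rw [show a + i + s0 = a + s0 + i by ring]
    rw [e1, prod_range_mod (fun j => |1 + h * d j|) n hn0 (a + s0), hAdef, eExp,
      ← Finset.abs_prod]
  have hPper : ∀ a L, P (a + n) L = P a L := by
    intro a L
    refine Finset.prod_congr rfl fun i _ => ?_
    rw [show a + n + i = a + i + n by ring, hμper]
  have hPperq : ∀ q a L, P (a + q * n) L = P a L := by
    intro q
    induction q with
    | zero => intro a L; simp
    | succ q ih =>
      intro a L
      rw [show a + (q + 1) * n = a + q * n + n by ring, hPper, ih]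
  have hPgeom : ∀ q a, P a (q * n) = A ^ q := by
    intro q
    induction q with
    | zero => intro a; simp [hPdef]
    | succ q ih =>
      intro a
      rw [show (q + 1) * n = q * n + n by ring, hPadd, ih, hPn, pow_succ]
  have claimP : ∀ a L, P a L = A ^ (L / n) * P (a + L / n * n) (L % n) := by
    intro a L
    have hL : L / n * n + L % n = L := Nat.div_add_mod' L n
    conv_lhs => rw [show L = L / n * n + L % n from hL.symm]
    rw [hPadd, hPgeom]
  have claimA : ∀ a L, P a L = A ^ (L / n) * (A * (P (a + L) (n - L % n))⁻¹) := by
    intro a L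
    have h1 := claimP a L
    have hmod : L % n < n := Nat.mod_lt _ hn0
    have h2 : P (a + L / n * n) (L % n) * P (a + L / n * n + L % n) (n - L % n)
        = P (a + L / n * n) n := by
      rw [← hPadd]
      congr 1
      omega
    have hb : a + L / n * n + L % n = a + L := by
      have := Nat.div_add_mod' L n
      omega
    rw [hb, hPperq] at h2
    rw [hPn] at h2
    rw [hPperq] at h1
    have h3 : P a (L % n) = A * (P (a + L) (n - L % n))⁻¹ :=
      (eq_mul_inv_iff_mul_eq₀ (hPpos _ _).ne').2 h2
    rw [h1, h3]
  have claimB : ∀ k i, P k (i + 1) = A ^ (i / n) * P k (i % n + 1) := by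
    intro k i
    have h1 : P k (i + 1) = P k (i / n * n + (i % n + 1)) := by
      congr 1
      have := Nat.div_add_mod' i n
      omega
    rw [h1, hPadd, hPgeom, hPperq]
  -- the sums S'
  set S' : ℕ → ℝ := fun k => ∑ j ∈ Finset.range n, (P k (j + 1))⁻¹ with hS'def
  set Smax : ℝ := ⨆ k : Fin n, Ssum h n d (k : ℕ) with hSmaxdef
  have hS'eq : ∀ k, S' k = Ssum h n d ((k + s0) % n) := by
    intro k
    simp only [hS'def, Ssum]
    refine Finset.sum_congr rfl fun j _ => ?_
    rw [← Finset.prod_inv_distrib]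
    refine Finset.prod_congr rfl fun i _ => ?_
    rw [one_div]
    have : ((k + s0) % n + i) % n = (k + i + s0) % n := by
      rw [Nat.mod_add_mod]
      congr 1
      omega
    simp only [hμdef, this]
  have hS'nonneg : ∀ k, 0 ≤ S' k := fun k =>
    Finset.sum_nonneg fun j _ => (inv_pos.2 (hPpos _ _)).le
  have hS'le : ∀ k, S' k ≤ Smax := by
    intro k
    rw [hS'eq k]
    have hlt : (k + s0) % n < n := Nat.mod_lt _ hn0
    have := le_ciSup (f := fun k : Fin n => Ssum h n d (k : ℕ))
      (Set.Finite.bddAbove (Set.finite_range _)) ⟨(k + s0) % n, hlt⟩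
    exact this
  have hSmax0 : 0 ≤ Smax := le_trans (hS'nonneg 0) (hS'le 0)
  have hK0 : K0 h n d = (h * A / |1 - A|) * Smax := rfl
  -- the fundamental solution E
  set E : ℕ → ℝ := fun m => ∏ t ∈ Finset.range m, (1 + h * μ t) with hEdef
  have hEnz : ∀ m, E m ≠ 0 := fun m => Finset.prod_ne_zero_iff.2 fun t _ => hμnz t
  have hEabs : ∀ m, |E m| = P 0 m := by
    intro m
    simp only [hEdef, hPdef]
    rw [Finset.abs_prod]
    exact Finset.prod_congr rfl fun t _ => by rw [zero_add]
  have hEsucc : ∀ m, E (m + 1) = (1 + h * μ m) * E m := by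
    intro m; simp only [hEdef]; rw [Finset.prod_range_succ]; ring
  have hE0 : E 0 = 1 := by simp [hEdef]
  have hEratio : ∀ k m, |E (k + m)| = |E k| * P k m := by
    intro k m
    have := hPadd 0 k m
    rw [zero_add] at this
    rw [hEabs, hEabs, this]
  have hEpos : ∀ m, 0 < |E m| := fun m => abs_pos.2 (hEnz m)
  -- solution property for multiples of E
  have hEsol : ∀ C : ℝ, ∀ t, hDiff h (fun m => E m * C) t = μ t * ((fun m => E m * C) t) := by
    intro C t
    simp only [hDiff]
    rw [hEsucc]
    field_simp
    ring
  -- the perturbation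
  set δ : ℕ → ℝ := fun t => hDiff h u t - μ t * u t with hδdef
  have hδb : ∀ t, |δ t| ≤ ε := hu
  have hrec : ∀ t, u (t + 1) = (1 + h * μ t) * u t + h * δ t := by
    intro t
    simp only [hδdef, hDiff]
    field_simp
    ring
  set w : ℕ → ℝ := fun t => u t / E t with hwdef
  have hwk : ∀ t, u t = E t * w t := by
    intro t
    simp only [hwdef]
    rw [mul_comm, div_mul_cancel₀ _ (hEnz t)]
  have hw : ∀ t, w (t + 1) = w t + h * (δ t / E (t + 1)) := by
    intro t
    simp only [hwdef]
    rw [hrec t, hEsucc t]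
    have h1 : (1 + h * μ t) ≠ 0 := hμnz t
    have h2 : E t ≠ 0 := hEnz t
    field_simp
  have hwsum : ∀ t, w t = w 0 + h * ∑ j ∈ Finset.range t, δ j / E (j + 1) := by
    intro t
    induction t with
    | zero => simp
    | succ t ih =>
      rw [hw t, ih, Finset.sum_range_succ]
      ring
  have hw0 : w 0 = u 0 := by simp [hwdef, hE0]
  set g : ℕ → ℝ := fun j => δ j / E (j + 1) with hgdef
  rcases lt_or_gt_of_ne he1 with hAlt | hAgt
  · -- Case A < 1
    have h1A : 0 < 1 - A := by linarith
    refine ⟨fun m => E m * u 0, hEsol (u 0), ?_⟩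
    intro k
    show |u k - E k * u 0| ≤ K0 h n d * ε
    have key : u k - E k * u 0 = h * ∑ j ∈ Finset.range k, E k * g j := by
      have hsum2 : ∑ j ∈ Finset.range k, E k * g j = E k * ∑ j ∈ Finset.range k, g j :=
        (Finset.mul_sum _ _ _).symm
      rw [hwk k, hwsum k, hw0, hsum2]
      ring
    set B : ℕ → ℝ := fun s => A * (P k (n - s))⁻¹ with hBdef
    have hB0 : ∀ s, 0 ≤ B s := fun s => mul_nonneg hA0.le (inv_pos.2 (hPpos _ _)).le
    obtain ⟨hsum, htsum⟩ := geom_mod n hn0 A hA0.le hAlt B hB0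
    set G : ℕ → ℝ := fun L => A ^ (L / n) * B (L % n) with hGdef
    have hG0 : ∀ L, 0 ≤ G L := fun L => mul_nonneg (pow_nonneg hA0.le _) (hB0 _)
    have hterm : ∀ j ∈ Finset.range k, |E k * g j| ≤ ε * G (k - 1 - j) := by
      intro j hj
      have hjk : j < k := Finset.mem_range.1 hj
      have hsplit : |E k| = |E (j + 1)| * P (j + 1) (k - 1 - j) := by
        have := hEratio (j + 1) (k - 1 - j)
        rw [show j + 1 + (k - 1 - j) = k by omega] at this
        exact this
      have hPG : P (j + 1) (k - 1 - j) = G (k - 1 - j) := by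
        have := claimA (j + 1) (k - 1 - j)
        rw [show j + 1 + (k - 1 - j) = k by omega] at this
        exact this
      have heq : |E k * g j| = G (k - 1 - j) * |δ j| := by
        simp only [hgdef]
        rw [abs_mul, abs_div, hsplit, hPG]
        have hne : |E (j + 1)| ≠ 0 := (hEpos _).ne'
        field_simp
      rw [heq]
      calc G (k - 1 - j) * |δ j| ≤ G (k - 1 - j) * ε :=
            mul_le_mul_of_nonneg_left (hδb j) (hG0 _)
        _ = ε * G (k - 1 - j) := by ring
    have b1 : |u k - E k * u 0| ≤ h * (ε * ((1 - A)⁻¹ * (A * S' k))) := by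
      calc |u k - E k * u 0| = h * |∑ j ∈ Finset.range k, E k * g j| := by
            rw [key, abs_mul, abs_of_pos hh]
        _ ≤ h * ∑ j ∈ Finset.range k, |E k * g j| :=
            mul_le_mul_of_nonneg_left (Finset.abs_sum_le_sum_abs _ _) hh.le
        _ ≤ h * ∑ j ∈ Finset.range k, ε * G (k - 1 - j) :=
            mul_le_mul_of_nonneg_left (Finset.sum_le_sum hterm) hh.le
        _ = h * (ε * ∑ j ∈ Finset.range k, G (k - 1 - j)) := by
            rw [← Finset.mul_sum]
        _ = h * (ε * ∑ j ∈ Finset.range k, G j) := by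
            rw [Finset.sum_range_reflect G k]
        _ ≤ h * (ε * ∑' L, G L) := by
            refine mul_le_mul_of_nonneg_left (mul_le_mul_of_nonneg_left ?_ hε) hh.le
            exact Summable.sum_le_tsum (Finset.range k) (fun i _ => hG0 i) hsum
        _ = h * (ε * ((1 - A)⁻¹ * ∑ s ∈ Finset.range n, B s)) := by rw [htsum]
        _ = h * (ε * ((1 - A)⁻¹ * (A * S' k))) := by
            congr 2
            have hBS : ∑ s ∈ Finset.range n, B s = A * S' k := by
              simp only [hBdef, hS'def, ← Finset.mul_sum]
              congr 1
              rw [← Finset.sum_range_reflect (fun s => (P k (s + 1))⁻¹) n]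
              refine Finset.sum_congr rfl fun s hs => ?_
              have := Finset.mem_range.1 hs
              congr 2
              omega
            rw [hBS]
    have hcoef : 0 ≤ h * ε * (1 - A)⁻¹ * A :=
      mul_nonneg (mul_nonneg (mul_nonneg hh.le hε) (inv_pos.2 h1A).le) hA0.le
    calc |u k - E k * u 0| ≤ h * (ε * ((1 - A)⁻¹ * (A * S' k))) := b1
      _ = (h * ε * (1 - A)⁻¹ * A) * S' k := by ring
      _ ≤ (h * ε * (1 - A)⁻¹ * A) * Smax := mul_le_mul_of_nonneg_left (hS'le k) hcoef
      _ = K0 h n d * ε := by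
          rw [hK0, abs_of_pos h1A]
          field_simp
  · -- Case A > 1
    have h1A : 0 < A - 1 := by linarith
    have hAi1 : A⁻¹ < 1 := by
      rw [inv_lt_one₀ hA0]
      exact hAgt
    have hPk : ∀ k, Summable (fun i : ℕ => (P k (i + 1))⁻¹) ∧
        ∑' i : ℕ, (P k (i + 1))⁻¹ = (1 - A⁻¹)⁻¹ * S' k := by
      intro k
      have hGeq : (fun i : ℕ => (P k (i + 1))⁻¹)
          = fun L : ℕ => (A⁻¹) ^ (L / n) * (fun s => (P k (s + 1))⁻¹) (L % n) := by
        funext i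
        rw [claimB k i, mul_inv, ← inv_pow]
      obtain ⟨hs, ht⟩ := geom_mod n hn0 A⁻¹ (inv_pos.2 hA0).le hAi1
        (fun s => (P k (s + 1))⁻¹) (fun s => (inv_pos.2 (hPpos _ _)).le)
      constructor
      · rw [hGeq]; exact hs
      · rw [hGeq, ht]
    have hgb : ∀ j, ‖g j‖ ≤ ε * (P 0 (j + 1))⁻¹ := by
      intro j
      simp only [hgdef]
      rw [Real.norm_eq_abs, abs_div, hEabs, div_eq_mul_inv]
      exact mul_le_mul_of_nonneg_right (hδb j) (inv_pos.2 (hPpos _ _)).le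
    have hgs : Summable g :=
      Summable.of_norm (Summable.of_nonneg_of_le (fun j => norm_nonneg _) hgb
        ((hPk 0).1.mul_left ε))
    set v0 : ℝ := u 0 + h * ∑' j, g j with hv0
    refine ⟨fun m => E m * v0, hEsol v0, ?_⟩
    intro k
    show |u k - E k * v0| ≤ K0 h n d * ε
    have tail : ∑ j ∈ Finset.range k, g j + ∑' i, g (i + k) = ∑' j, g j :=
      Summable.sum_add_tsum_nat_add k hgs
    have key : u k - E k * v0 = -h * (E k * ∑' i, g (i + k)) := by
      rw [hwk k, hwsum k, hw0, hv0, ← tail]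
      ring
    have hterm : ∀ i : ℕ, ‖E k * g (i + k)‖ ≤ ε * (P k (i + 1))⁻¹ := by
      intro i
      have hEr : |E (i + k + 1)| = |E k| * P k (i + 1) := by
        have := hEratio k (i + 1)
        rw [show k + (i + 1) = i + k + 1 by omega] at this
        exact this
      simp only [hgdef]
      rw [Real.norm_eq_abs, abs_mul, abs_div, hEr]
      have heq : |E k| * (|δ (i + k)| / (|E k| * P k (i + 1)))
          = |δ (i + k)| * (P k (i + 1))⁻¹ := by
        have h1 : |E k| ≠ 0 := (hEpos k).ne'
        have h2 : P k (i + 1) ≠ 0 := (hPpos _ _).ne'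
        field_simp
      rw [heq]
      exact mul_le_mul_of_nonneg_right (hδb _) (inv_pos.2 (hPpos _ _)).le
    have hbsum : Summable (fun i : ℕ => ε * (P k (i + 1))⁻¹) := (hPk k).1.mul_left ε
    have hnorm : Summable (fun i : ℕ => ‖E k * g (i + k)‖) :=
      Summable.of_nonneg_of_le (fun i => norm_nonneg _) hterm hbsum
    have b1 : |u k - E k * v0| ≤ h * (ε * ((1 - A⁻¹)⁻¹ * S' k)) := by
      calc |u k - E k * v0| = h * |E k * ∑' i, g (i + k)| := by
            rw [key, abs_mul, abs_neg, abs_of_pos hh]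
        _ = h * |∑' i, E k * g (i + k)| := by rw [tsum_mul_left]
        _ ≤ h * ∑' i, ‖E k * g (i + k)‖ := by
            refine mul_le_mul_of_nonneg_left ?_ hh.le
            exact norm_tsum_le_tsum_norm hnorm
        _ ≤ h * ∑' i, ε * (P k (i + 1))⁻¹ :=
            mul_le_mul_of_nonneg_left (Summable.tsum_le_tsum hterm hnorm hbsum) hh.le
        _ = h * (ε * ((1 - A⁻¹)⁻¹ * S' k)) := by
            rw [tsum_mul_left, (hPk k).2]
    have hdiv : (0:ℝ) ≤ A / (A - 1) := div_nonneg hA0.le h1A.le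
    have hcoef : 0 ≤ h * ε * (A / (A - 1)) := mul_nonneg (mul_nonneg hh.le hε) hdiv
    have hinv : (1 - A⁻¹)⁻¹ = A / (A - 1) := by
      rw [show 1 - A⁻¹ = (A - 1) / A by field_simp, inv_div]
    calc |u k - E k * v0| ≤ h * (ε * ((1 - A⁻¹)⁻¹ * S' k)) := b1
      _ = (h * ε * (A / (A - 1))) * S' k := by rw [hinv]; ring
      _ ≤ (h * ε * (A / (A - 1))) * Smax := mul_le_mul_of_nonneg_left (hS'le k) hcoef
      _ = K0 h n d * ε := by
          rw [hK0, abs_of_neg (by linarith : (1:ℝ) - A < 0)]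
          field_simp
          ring

noncomputable def partSol (h : ℝ) (μ f : ℕ → ℝ) : ℕ → ℝ
  | 0 => 0
  | k + 1 => (1 + h * μ k) * partSol h μ f k + h * f k

lemma hu1inh (h : ℝ) (hh : 0 < h) (n : ℕ) (hn : 1 ≤ n) (d : ℕ → ℝ)
    (hnz : ∀ j, j < n → 1 + h * d j ≠ 0)
    (he0 : 0 < |eExp h n d|) (he1 : |eExp h n d| ≠ 1)
    (s0 : ℕ) (ε : ℝ) (hε : 0 ≤ ε) (f u : ℕ → ℝ)
    (hu : ∀ k, |hDiff h u k - d ((k + s0) % n) * u k - f k| ≤ ε) :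
    ∃ v : ℕ → ℝ, (∀ k, hDiff h v k - d ((k + s0) % n) * v k = f k) ∧
      ∀ k, |u k - v k| ≤ K0 h n d * ε := by
  set μ : ℕ → ℝ := fun t => d ((t + s0) % n) with hμdef
  set ps : ℕ → ℝ := partSol h μ f with hps
  have hpsol : ∀ k, hDiff h ps k - μ k * ps k = f k := by
    intro k
    simp only [hDiff, hps]
    rw [show partSol h μ f (k + 1) = (1 + h * μ k) * partSol h μ f k + h * f k from rfl]
    field_simp
    ring
  have hdiffeq : ∀ k, hDiff h (fun t => u t - ps t) k - μ k * (u k - ps k)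
      = hDiff h u k - μ k * u k - f k := by
    intro k
    rw [← hpsol k]
    simp only [hDiff]
    ring
  have hu' : ∀ k, |hDiff h (fun t => u t - ps t) k - μ k * ((fun t => u t - ps t) k)| ≤ ε := by
    intro k
    rw [show ((fun t => u t - ps t) k) = u k - ps k from rfl, hdiffeq k]
    exact hu k
  obtain ⟨v', hv'sol, hv'b⟩ := hu1 h hh n hn d hnz he0 he1 s0 ε hε (fun t => u t - ps t) hu'
  refine ⟨fun t => v' t + ps t, ?_, ?_⟩
  · intro k
    have e1 := hv'sol k
    have e2 := hpsol k
    show hDiff h (fun t => v' t + ps t) k - μ k * (v' k + ps k) = f k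
    simp only [hDiff] at e1 e2 ⊢
    field_simp at e1 e2 ⊢
    linarith
  · intro k
    have := hv'b k
    rw [show (fun t => u t - ps t) k - v' k = u k - (v' k + ps k) by simp; ring] at this
    exact this

lemma K0_nonneg (h : ℝ) (hh : 0 < h) (n : ℕ) (hn : 1 ≤ n) (c : ℕ → ℝ) :
    0 ≤ K0 h n c := by
  have h0 : ∀ m : ℕ, 0 ≤ Ssum h n c m := by
    intro m
    refine Finset.sum_nonneg fun j _ => Finset.prod_nonneg fun i _ => ?_
    positivity
  have hS : 0 ≤ ⨆ k : Fin n, Ssum h n c (k : ℕ) := by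
    refine le_trans (h0 0) ?_
    have := le_ciSup (f := fun k : Fin n => Ssum h n c (k : ℕ))
      (Set.Finite.bddAbove (Set.finite_range _)) (⟨0, hn⟩ : Fin n)
    exact this
  exact mul_nonneg (div_nonneg (mul_nonneg hh.le (abs_nonneg _)) (abs_nonneg _)) hS
theorem stmt_6 (h : ℝ) (hh : 0 < h) (n : ℕ) (hn : 1 ≤ n) (c : ℕ → ℝ)
    (hc : ∀ j, j < n → c j ≠ 1 / h ∧ c j ≠ -1 / h)
    (he0 : 0 < |eExp h n c|) (he1 : |eExp h n c| ≠ 1)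
    (hne0 : 0 < |eExp h n (fun j => -c j)|) (hne1 : |eExp h n (fun j => -c j)| ≠ 1)
    (p q r : ℕ → ℝ)
    (hp : ∀ k, p k = -cyc n c (k + 2))
    (hq : ∀ k, q k = -2 * hDiff h (cyc n c) (k + 1) + hDiff h (cyc n c) (k + 2)
      - cyc n c (k + 2) * cyc n c (k + 3))
    (hr : ∀ k, r k = -hDiff h (hDiff h (cyc n c)) k - cyc n c k * hDiff h (cyc n c) (k + 2)
      + cyc n c k * cyc n c (k + 2) * cyc n c (k + 3)) :
    ∀ ε : ℝ, 0 < ε → ∀ ξ : ℕ → ℝ,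
      (∀ k, |hDiff h (hDiff h (hDiff h ξ)) k + p k * hDiff h (hDiff h ξ) k
        + q k * hDiff h ξ k + r k * ξ k| ≤ ε) →
      ∃ y : ℕ → ℝ,
        (∀ k, hDiff h (hDiff h (hDiff h y)) k + p k * hDiff h (hDiff h y) k
          + q k * hDiff h y k + r k * y k = 0) ∧
        ∀ k, |ξ k - y k| ≤ (K0 h n c) ^ 2 * K0 h n (fun j => -c j) * ε := by
  have hc1 : ∀ j, j < n → 1 + h * c j ≠ 0 := by
    intro j hj heq
    refine (hc j hj).2 ?_
    try field_simp
    linarith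
  have hc2 : ∀ j, j < n → 1 + h * (fun j => -c j) j ≠ 0 := by
    intro j hj heq
    simp only at heq
    refine (hc j hj).1 ?_
    try field_simp
    linarith
  intro ε hε ξ hξ
  set La : (ℕ → ℝ) → ℕ → ℝ := fun x k => hDiff h x k - c ((k + 3) % n) * x k with hLa
  set Lb : (ℕ → ℝ) → ℕ → ℝ := fun x k => hDiff h x k + c ((k + 2) % n) * x k with hLb
  set Lc : (ℕ → ℝ) → ℕ → ℝ := fun x k => hDiff h x k - c (k % n) * x k with hLc
  have hfact : ∀ (x : ℕ → ℝ) (k : ℕ), La (Lb (Lc x)) k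
      = hDiff h (hDiff h (hDiff h x)) k + p k * hDiff h (hDiff h x) k
        + q k * hDiff h x k + r k * x k := by
    intro x k
    rw [hp k, hq k, hr k]
    simp only [hLa, hLb, hLc, hDiff, cyc]
    ring_nf
    try field_simp
    try ring
  -- Step 1: homogeneous HU for the outermost factor
  have hstep1 : ∀ k, |hDiff h (Lb (Lc ξ)) k - c ((k + 3) % n) * (Lb (Lc ξ)) k| ≤ ε := by
    intro k
    have := hξ k
    rw [← hfact ξ k] at this
    simpa only [hLa] using this
  obtain ⟨v2, hv2sol, hv2b⟩ := hu1 h hh n hn c hc1 he0 he1 3 ε hε.le (Lb (Lc ξ)) hstep1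
  -- Step 2: inhomogeneous HU for the middle factor
  have hK0c : 0 ≤ K0 h n c := K0_nonneg h hh n hn c
  have hK0n : 0 ≤ K0 h n (fun j => -c j) := K0_nonneg h hh n hn _
  have hstep2 : ∀ k, |hDiff h (Lc ξ) k - (fun j => -c j) ((k + 2) % n) * (Lc ξ) k - v2 k|
      ≤ K0 h n c * ε := by
    intro k
    have := hv2b k
    simp only [hLb] at this
    rw [show hDiff h (Lc ξ) k - (fun j => -c j) ((k + 2) % n) * (Lc ξ) k - v2 k
      = hDiff h (Lc ξ) k + c ((k + 2) % n) * (Lc ξ) k - v2 k by simp]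
    exact this
  obtain ⟨w', hw'sol, hw'b⟩ := hu1inh h hh n hn (fun j => -c j) hc2 hne0 hne1 2
    (K0 h n c * ε) (mul_nonneg hK0c hε.le) v2 (Lc ξ) hstep2
  -- Step 3: inhomogeneous HU for the innermost factor
  have hstep3 : ∀ k, |hDiff h ξ k - c ((k + 0) % n) * ξ k - w' k|
      ≤ K0 h n (fun j => -c j) * (K0 h n c * ε) := by
    intro k
    have := hw'b k
    simp only [hLc] at this
    rw [Nat.add_zero]
    exact this
  obtain ⟨y, hysol, hyb⟩ := hu1inh h hh n hn c hc1 he0 he1 0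
    (K0 h n (fun j => -c j) * (K0 h n c * ε))
    (mul_nonneg hK0n (mul_nonneg hK0c hε.le)) w' ξ hstep3
  refine ⟨y, ?_, ?_⟩
  · intro k
    rw [← hfact y k]
    have hLcy : Lc y = w' := by
      funext t
      have := hysol t
      rw [Nat.add_zero] at this
      simpa only [hLc] using this
    rw [hLcy]
    have hLbw : Lb w' = v2 := by
      funext t
      have := hw'sol t
      simp only [hLb]
      linarith
    rw [hLbw]
    simp only [hLa]
    rw [hv2sol k]
    ring
  · intro k
    have := hyb k
    calc |ξ k - y k| ≤ K0 h n c * (K0 h n (fun j => -c j) * (K0 h n c * ε)) := this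
      _ = (K0 h n c) ^ 2 * K0 h n (fun j => -c j) * ε := by ring
end
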